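/- arXiv:2301.00466 — 13 statements merged into one kernel-verified Lean document; each statement's English description precedes it below -/
import Mathlib

section
/- Let f : [0,∞) → ℝ be uniformly continuous, and suppose the limit lim_{t→∞} ∫₀^t f(τ) dτ exists and is finite. Then lim_{t→∞} f(t) = 0. -/
/-- Barbalat's lemma (original form): if `f` is uniformly continuous on `[0, ∞)`
and `∫₀ᵗ f` converges to a finite limit as `t → ∞`, then `f(t) → 0`. -/
theorem barbalat_original
    (f : ℝ → ℝ)
    (huc : UniformContinuousOn f (Set.Ici 0))
    (hlim : ∃ L : ℝ, Filter.Tendsto (fun t => ∫ τ in (0:ℝ)..t, f τ)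
      Filter.atTop (nhds L)) :
    Filter.Tendsto f Filter.atTop (nhds 0) := by
  obtain ⟨L, hL⟩ := hlim
  have hcont : ContinuousOn f (Set.Ici 0) := huc.continuousOn
  by_contra hcon
  rw [Metric.tendsto_atTop] at hcon
  push_neg at hcon
  obtain ⟨ε, hε, hbad⟩ := hcon
  rw [Metric.uniformContinuousOn_iff] at huc
  obtain ⟨δ, hδ, hud⟩ := huc (ε/2) (by positivity)
  set d := δ/2 with hd
  have hdpos : 0 < d := by positivity
  rw [Metric.tendsto_atTop] at hL
  obtain ⟨N, hN⟩ := hL (ε * d / 4) (by positivity)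
  obtain ⟨t, ht, htf⟩ := hbad (max N 0)
  have htN : N ≤ t := le_trans (le_max_left _ _) ht
  have ht0 : (0:ℝ) ≤ t := le_trans (le_max_right _ _) ht
  rw [Real.dist_eq, sub_zero] at htf
  have hsub : Set.uIcc t (t + d) ⊆ Set.Ici 0 := by
    rw [Set.uIcc_of_le (by linarith)]
    intro x hx; exact le_trans ht0 hx.1
  have hint : IntervalIntegrable f MeasureTheory.volume t (t + d) :=
    (hcont.mono hsub).intervalIntegrable
  have hsub0 : Set.uIcc 0 t ⊆ Set.Ici 0 := by
    rw [Set.uIcc_of_le ht0]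
    intro x hx; exact hx.1
  have hint0 : IntervalIntegrable f MeasureTheory.volume 0 t :=
    (hcont.mono hsub0).intervalIntegrable
  have hclose : ∀ s ∈ Set.Icc t (t + d), |f s - f t| < ε / 2 := by
    intro s hs
    have hs0 : s ∈ Set.Ici (0:ℝ) := le_trans ht0 hs.1
    have hdist : dist s t < δ := by
      rw [Real.dist_eq, abs_of_nonneg (by linarith [hs.1])]
      linarith [hs.2]
    simpa [Real.dist_eq] using hud s hs0 t (Set.mem_Ici.mpr ht0) hdist
  have key : ε / 2 * d ≤ |∫ τ in t..(t + d), f τ| := by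
    rcases abs_cases (f t) with ⟨heq, hsign⟩ | ⟨heq, hsign⟩
    · have hft : ε ≤ f t := heq ▸ htf
      have hlow : ∀ s ∈ Set.Icc t (t + d), ε / 2 ≤ f s := by
        intro s hs
        have h := abs_lt.mp (hclose s hs)
        linarith [h.1]
      have h1 : ∫ τ in t..(t+d), (ε/2 : ℝ) ≤ ∫ τ in t..(t+d), f τ :=
        intervalIntegral.integral_mono_on (by linarith)
          intervalIntegrable_const hint hlow
      rw [intervalIntegral.integral_const, smul_eq_mul] at h1
      have heq2 : (t + d - t) * (ε/2) = ε/2 * d := by ring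
      have h2 : ε/2 * d ≤ ∫ τ in t..(t+d), f τ := by linarith
      exact h2.trans (le_abs_self _)
    · have hft : f t ≤ -ε := by
        have : ε ≤ -f t := heq ▸ htf
        linarith
      have hhigh : ∀ s ∈ Set.Icc t (t + d), f s ≤ -(ε / 2) := by
        intro s hs
        have h := abs_lt.mp (hclose s hs)
        linarith [h.2]
      have h1 : ∫ τ in t..(t+d), f τ ≤ ∫ τ in t..(t+d), (-(ε/2) : ℝ) :=
        intervalIntegral.integral_mono_on (by linarith)
          hint intervalIntegrable_const hhigh
      rw [intervalIntegral.integral_const, smul_eq_mul] at h1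
      have heq2 : (t + d - t) * (-(ε/2)) = -(ε/2 * d) := by ring
      have h2 : ∫ τ in t..(t+d), f τ ≤ -(ε/2 * d) := by linarith
      calc ε/2 * d ≤ -∫ τ in t..(t+d), f τ := by linarith
        _ ≤ |∫ τ in t..(t+d), f τ| := neg_le_abs _
  have hadd : (∫ τ in (0:ℝ)..t, f τ) + ∫ τ in t..(t+d), f τ
      = ∫ τ in (0:ℝ)..(t+d), f τ :=
    intervalIntegral.integral_add_adjacent_intervals hint0 hint
  have hN1 := hN t htN
  have hN2 := hN (t + d) (by linarith)
  rw [Real.dist_eq] at hN1 hN2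
  have habs : |∫ τ in t..(t+d), f τ| < ε * d / 2 := by
    have : (∫ τ in t..(t+d), f τ)
        = ((∫ τ in (0:ℝ)..(t+d), f τ) - L) - ((∫ τ in (0:ℝ)..t, f τ) - L) := by
      linarith [hadd]
    rw [this]
    calc |((∫ τ in (0:ℝ)..(t+d), f τ) - L) - ((∫ τ in (0:ℝ)..t, f τ) - L)|
        ≤ |(∫ τ in (0:ℝ)..(t+d), f τ) - L| + |(∫ τ in (0:ℝ)..t, f τ) - L| :=
          abs_sub _ _
      _ < ε * d / 4 + ε * d / 4 := add_lt_add hN2 hN1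
      _ = ε * d / 2 := by ring
  linarith [key, habs]
end

section
/- Let f : [0,∞) → ℝ be differentiable on [0,∞) with derivative f'. If ∫₀^∞ |f(s)|² ds < ∞ (i.e., f ∈ L²) and f' is bounded on [0,∞) (i.e., f' ∈ L∞), then lim_{t→∞} f(t) = 0. -/
open MeasureTheory Set Filter

/-- Tao's (1997) lemma: if `f ∈ L²` on `[0,∞)` and `f'` is bounded there,
then `f(t) → 0`. -/
theorem tao_L2_deriv_bounded
    (f f' : ℝ → ℝ)
    (hderiv : ∀ t ∈ Set.Ici (0:ℝ), HasDerivWithinAt f (f' t) (Set.Ici 0) t)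
    (hL2 : MeasureTheory.IntegrableOn (fun s => |f s| ^ 2) (Set.Ici 0))
    (hbdd : ∃ C : ℝ, ∀ t ∈ Set.Ici (0:ℝ), |f' t| ≤ C) :
    Filter.Tendsto f Filter.atTop (nhds 0) := by
  classical
  obtain ⟨C, hC⟩ := hbdd
  set C' : ℝ := max C 1 with hC'
  have hC'pos : (0:ℝ) < C' := lt_of_lt_of_le one_pos (le_max_right _ _)
  have hC'bound : ∀ t ∈ Set.Ici (0:ℝ), ‖f' t‖ ≤ C' := fun t ht =>
    (hC t ht).trans (le_max_left _ _)
  have hLip : ∀ x ∈ Set.Ici (0:ℝ), ∀ y ∈ Set.Ici (0:ℝ),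
      ‖f y - f x‖ ≤ C' * ‖y - x‖ := fun x hx y hy =>
    (convex_Ici 0).norm_image_sub_le_of_norm_hasDerivWithin_le hderiv hC'bound hx hy
  have hnonnegInt : ∀ (t : Set ℝ),
      (0 : ℝ → ℝ) ≤ᵐ[volume.restrict t] fun s => |f s| ^ 2 :=
    fun t => Filter.Eventually.of_forall (fun x => by positivity)
  by_contra hnot
  rw [Metric.tendsto_atTop] at hnot
  push_neg at hnot
  obtain ⟨ε, hε, hbig⟩ := hnot
  set δ : ℝ := ε / (2 * C') with hδdef
  have hδpos : 0 < δ := div_pos hε (by positivity)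
  have hCδ : C' * δ = ε / 2 := by
    rw [hδdef]; field_simp
  have key : ∀ N : ℝ, ∃ u, max 0 N ≤ u ∧ ε ≤ |f u| := by
    intro N
    obtain ⟨u, hu, hd⟩ := hbig (max 0 N)
    exact ⟨u, hu, by simpa [Real.dist_eq] using hd⟩
  let T : ℕ → ℝ := fun n => Nat.rec (Classical.choose (key 0))
    (fun _ prev => Classical.choose (key (prev + δ))) n
  have hT0 : (0:ℝ) ≤ T 0 := le_trans (le_max_left _ _) (Classical.choose_spec (key 0)).1
  have hTstep : ∀ n, T n + δ ≤ T (n+1) := fun n =>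
    le_trans (le_max_right _ _) (Classical.choose_spec (key (T n + δ))).1
  have hTbig : ∀ n, ε ≤ |f (T n)| := by
    intro n
    cases n with
    | zero => exact (Classical.choose_spec (key 0)).2
    | succ m => exact (Classical.choose_spec (key (T m + δ))).2
  have hTnonneg : ∀ n, 0 ≤ T n := by
    intro n
    induction n with
    | zero => exact hT0
    | succ m ih => linarith [hTstep m, hδpos]
  -- pointwise lower bound on each interval
  have hpt : ∀ n, ∀ s ∈ Set.Ioc (T n) (T n + δ), (ε/2)^2 ≤ |f s|^2 := by
    intro n s hs
    have hs0 : (0:ℝ) ≤ s := le_trans (hTnonneg n) hs.1.le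
    have h1 : ‖f s - f (T n)‖ ≤ C' * ‖s - T n‖ := hLip (T n) (hTnonneg n) s hs0
    have h2 : |s - T n| ≤ δ := by
      rw [abs_of_nonneg (by linarith [hs.1.le] : (0:ℝ) ≤ s - T n)]
      linarith [hs.2]
    simp only [Real.norm_eq_abs] at h1
    have h3 : |s - T n| * C' ≤ δ * C' := mul_le_mul_of_nonneg_right h2 hC'pos.le
    have h4 : |f s - f (T n)| ≤ ε / 2 := by
      calc |f s - f (T n)| ≤ C' * |s - T n| := h1
        _ ≤ C' * δ := by linarith [h3]
        _ = ε / 2 := hCδ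
    have h5 : |f (T n)| - |f s| ≤ |f s - f (T n)| := by
      have := abs_sub_abs_le_abs_sub (f (T n)) (f s)
      rwa [abs_sub_comm] at this
    have h6 : ε / 2 ≤ |f s| := by linarith [hTbig n]
    nlinarith [abs_nonneg (f s)]
  -- integral lower bound per interval
  have hIoc_sub : ∀ n, Set.Ioc (T n) (T n + δ) ⊆ Set.Ici (0:ℝ) :=
    fun n x hx => le_trans (hTnonneg n) hx.1.le
  have hint : ∀ n, δ * (ε/2)^2 ≤ ∫ s in Set.Ioc (T n) (T n + δ), |f s|^2 := by
    intro n
    have hmeas : MeasurableSet (Set.Ioc (T n) (T n + δ)) := measurableSet_Ioc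
    have hfin : volume (Set.Ioc (T n) (T n + δ)) ≠ ⊤ := by
      rw [Real.volume_Ioc]; exact ENNReal.ofReal_ne_top
    have hIntOn : IntegrableOn (fun s => |f s|^2) (Set.Ioc (T n) (T n + δ)) :=
      hL2.mono_set (hIoc_sub n)
    have := MeasureTheory.setIntegral_ge_of_const_le hmeas hfin (hpt n) hIntOn
    have hvol : (volume (Set.Ioc (T n) (T n + δ))).toReal = δ := by
      rw [Real.volume_Ioc, ENNReal.toReal_ofReal (by linarith)]
      ring
    rw [measureReal_def, hvol, smul_eq_mul] at this
    linarith [this]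
  -- main induction
  have main : ∀ n : ℕ, ((n:ℝ)+1) * (δ * (ε/2)^2) ≤ ∫ s in Set.Icc 0 (T n + δ), |f s|^2 := by
    intro n
    induction n with
    | zero =>
      have hsub : Set.Ioc (T 0) (T 0 + δ) ⊆ Set.Icc 0 (T 0 + δ) :=
        fun x hx => ⟨le_trans hT0 hx.1.le, hx.2⟩
      have hIcc_sub : Set.Icc (0:ℝ) (T 0 + δ) ⊆ Set.Ici 0 := fun x hx => hx.1
      have := MeasureTheory.setIntegral_mono_set (hL2.mono_set hIcc_sub)
        (hnonnegInt _) (HasSubset.Subset.eventuallyLE hsub)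
      simp only [Nat.cast_zero, zero_add, one_mul]
      linarith [hint 0, this]
    | succ m ih =>
      have h1 : (0:ℝ) ≤ T m + δ := by linarith [hTnonneg m]
      have h2 : T m + δ ≤ T (m+1) + δ := by linarith [hTstep m]
      have hunion : Set.Icc (0:ℝ) (T m + δ) ∪ Set.Ioc (T m + δ) (T (m+1) + δ)
          = Set.Icc 0 (T (m+1) + δ) := Set.Icc_union_Ioc_eq_Icc h1 h2
      have hdisj : Disjoint (Set.Icc (0:ℝ) (T m + δ)) (Set.Ioc (T m + δ) (T (m+1) + δ)) := by
        rw [Set.disjoint_left]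
        rintro x ⟨_, hx2⟩ ⟨hx3, _⟩
        exact absurd hx2 (not_le.mpr hx3)
      have hIcc_sub : Set.Icc (0:ℝ) (T m + δ) ⊆ Set.Ici 0 := fun x hx => hx.1
      have hIoc_sub' : Set.Ioc (T m + δ) (T (m+1) + δ) ⊆ Set.Ici (0:ℝ) :=
        fun x hx => le_trans h1 hx.1.le
      have hadd : ∫ s in Set.Icc (0:ℝ) (T (m+1) + δ), |f s|^2
          = (∫ s in Set.Icc (0:ℝ) (T m + δ), |f s|^2)
            + ∫ s in Set.Ioc (T m + δ) (T (m+1) + δ), |f s|^2 := by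
        rw [← hunion]
        exact MeasureTheory.setIntegral_union hdisj measurableSet_Ioc
          (hL2.mono_set hIcc_sub) (hL2.mono_set hIoc_sub')
      have hsub2 : Set.Ioc (T (m+1)) (T (m+1) + δ) ⊆ Set.Ioc (T m + δ) (T (m+1) + δ) :=
        fun x hx => ⟨lt_of_le_of_lt (hTstep m) hx.1, hx.2⟩
      have hmono : (∫ s in Set.Ioc (T (m+1)) (T (m+1) + δ), |f s|^2)
          ≤ ∫ s in Set.Ioc (T m + δ) (T (m+1) + δ), |f s|^2 :=
        MeasureTheory.setIntegral_mono_set (hL2.mono_set hIoc_sub')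
          (hnonnegInt _) (HasSubset.Subset.eventuallyLE hsub2)
      have := hint (m+1)
      push_cast
      rw [hadd]
      push_cast at ih
      linarith
  -- conclude
  have hIle : ∀ n : ℕ, (∫ s in Set.Icc (0:ℝ) (T n + δ), |f s|^2)
      ≤ ∫ s in Set.Ici (0:ℝ), |f s|^2 := by
    intro n
    exact MeasureTheory.setIntegral_mono_set hL2 (hnonnegInt _)
      (HasSubset.Subset.eventuallyLE (fun x hx => hx.1))
  set I : ℝ := ∫ s in Set.Ici (0:ℝ), |f s|^2 with hI
  have hcpos : (0:ℝ) < δ * (ε/2)^2 := by positivity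
  obtain ⟨n, hn⟩ := exists_nat_gt (I / (δ * (ε/2)^2))
  have hgt : I < (n:ℝ) * (δ * (ε/2)^2) := by
    rw [div_lt_iff₀ hcpos] at hn
    exact hn
  have h1 := main n
  have h2 := hIle n
  nlinarith
end

section
/- Let f : [0,∞) → ℝ be differentiable on [0,∞) with derivative f'. If ∫₀^∞ |f(s)|² ds < ∞ and ∫₀^∞ |f'(s)|² ds < ∞ (i.e., both f ∈ L² and f' ∈ L²), then f is bounded on [0,∞) and lim_{t→∞} f(t) = 0. -/
open MeasureTheory Set Filter intervalIntegral

/-- Desoer–Vidyasagar: if `f ∈ L²` and `f' ∈ L²` on `[0,∞)`, then `f` is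
bounded on `[0,∞)` and `f(t) → 0`. -/
theorem desoer_vidyasagar_L2_L2
    (f f' : ℝ → ℝ)
    (hderiv : ∀ t ∈ Set.Ici (0:ℝ), HasDerivWithinAt f (f' t) (Set.Ici 0) t)
    (hfL2 : MeasureTheory.IntegrableOn (fun s => |f s| ^ 2) (Set.Ici 0))
    (hf'L2 : MeasureTheory.IntegrableOn (fun s => |f' s| ^ 2) (Set.Ici 0)) :
    (∃ M : ℝ, ∀ t ∈ Set.Ici (0:ℝ), |f t| ≤ M) ∧
      Filter.Tendsto f Filter.atTop (nhds 0) := by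
  classical
  set p : ℝ → ℝ := fun s => 2 * f s * f' s with hp_def
  -- continuity of f on Ici 0
  have hfc : ContinuousOn f (Set.Ici 0) := fun t ht =>
    (hderiv t ht).continuousWithinAt
  -- f' agrees with a measurable function on Ici 0
  have hf'eq : ∀ t ∈ Set.Ici (0:ℝ), f' t = derivWithin f (Set.Ici t) t := by
    intro t ht
    have h1 : HasDerivWithinAt f (f' t) (Set.Ici t) t :=
      (hderiv t ht).mono (Set.Ici_subset_Ici.2 ht)
    exact (h1.derivWithin (uniqueDiffOn_Ici t t Set.self_mem_Ici)).symm
  have hf'meas : AEStronglyMeasurable f' (volume.restrict (Set.Ici (0:ℝ))) := by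
    have hm : Measurable fun x : ℝ => derivWithin f (Set.Ici x) x :=
      measurable_derivWithin_Ici f
    refine (hm.aestronglyMeasurable).congr ?_
    rw [Filter.EventuallyEq, ae_restrict_iff' measurableSet_Ici]
    exact Filter.Eventually.of_forall fun t ht => (hf'eq t ht).symm
  have hfmeas : AEStronglyMeasurable f (volume.restrict (Set.Ici (0:ℝ))) :=
    hfc.aestronglyMeasurable measurableSet_Ici
  -- p is integrable on Ici 0
  have hpmeas : AEStronglyMeasurable p (volume.restrict (Set.Ici (0:ℝ))) :=
    (aestronglyMeasurable_const.mul hfmeas).mul hf'meas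
  have hbound : Integrable (fun s => |f s| ^ 2 + |f' s| ^ 2)
      (volume.restrict (Set.Ici (0:ℝ))) := hfL2.add hf'L2
  have hpint : MeasureTheory.IntegrableOn p (Set.Ici 0) := by
    refine hbound.mono' hpmeas ?_
    refine Filter.Eventually.of_forall fun s => ?_
    have : |p s| = 2 * (|f s| * |f' s|) := by
      simp [hp_def, abs_mul, mul_assoc]
    rw [Real.norm_eq_abs, this]
    nlinarith [sq_nonneg (|f s| - |f' s|), abs_nonneg (f s), abs_nonneg (f' s)]
  have hpabs : MeasureTheory.IntegrableOn (fun s => |p s|) (Set.Ici 0) := hpint.abs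
  set B : ℝ := ∫ s in Set.Ici (0:ℝ), |p s| with hB_def
  set L : ℝ := ∫ s in Set.Ioi (0:ℝ), p s with hL_def
  -- FTC
  have key : ∀ t : ℝ, 0 ≤ t → f t ^ 2 - f 0 ^ 2 = ∫ s in (0:ℝ)..t, p s := by
    intro t ht
    have hcont : ContinuousOn (fun s => f s ^ 2) (Set.Icc 0 t) :=
      ((hfc.mono Set.Icc_subset_Ici_self).pow 2)
    have hder : ∀ x ∈ Set.Ioo (0:ℝ) t,
        HasDerivWithinAt (fun s => f s ^ 2) (p x) (Set.Ioi x) x := by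
      intro x hx
      have h0 : HasDerivAt f (f' x) x := by
        have := hderiv x (le_of_lt hx.1)
        exact this.hasDerivAt (Ici_mem_nhds hx.1)
      have : HasDerivAt (fun s => f s ^ 2) (2 * f x * f' x) x := by
        have h2 := h0.mul h0
        have : HasDerivAt (fun y => f y * f y) (2 * f x * f' x) x := by
          exact h2.congr_deriv (by ring)
        simpa [pow_two] using this
      exact this.hasDerivWithinAt
    have hint : IntervalIntegrable p volume 0 t := by
      have : MeasureTheory.IntegrableOn p (Set.Icc 0 t) :=
        hpint.mono_set (Set.Icc_subset_Ici_self)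
      exact MeasureTheory.IntegrableOn.intervalIntegrable
        (by rwa [Set.uIcc_of_le ht])
    exact (intervalIntegral.integral_eq_sub_of_hasDeriv_right_of_le ht hcont hder hint).symm
  -- bound on the interval integral
  have hIbound : ∀ t : ℝ, 0 ≤ t → |∫ s in (0:ℝ)..t, p s| ≤ B := by
    intro t ht
    have h1 : |∫ s in (0:ℝ)..t, p s| ≤ ∫ s in (0:ℝ)..t, |p s| := by
      exact (intervalIntegral.abs_integral_le_integral_abs ht)
    have h2 : (∫ s in (0:ℝ)..t, |p s|) = ∫ s in Set.Ioc 0 t, |p s| := by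
      rw [intervalIntegral.integral_of_le ht]
    have h3 : (∫ s in Set.Ioc (0:ℝ) t, |p s|) ≤ B := by
      refine MeasureTheory.setIntegral_mono_set hpabs ?_ ?_
      · exact Filter.Eventually.of_forall fun s => abs_nonneg _
      · exact Filter.Eventually.of_forall (fun s hs => le_of_lt hs.1)
    linarith
  constructor
  · -- boundedness
    refine ⟨Real.sqrt (f 0 ^ 2 + B), fun t ht => ?_⟩
    have h1 : f t ^ 2 ≤ f 0 ^ 2 + B := by
      have := key t ht
      have h2 := hIbound t ht
      have := abs_le.1 h2
      linarith
    calc |f t| = Real.sqrt (f t ^ 2) := by rw [Real.sqrt_sq_eq_abs]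
      _ ≤ Real.sqrt (f 0 ^ 2 + B) := Real.sqrt_le_sqrt h1
  · -- limit
    have htend : Filter.Tendsto (fun t => ∫ s in (0:ℝ)..t, p s) Filter.atTop
        (nhds L) :=
      MeasureTheory.intervalIntegral_tendsto_integral_Ioi 0
        (hpint.mono_set Set.Ioi_subset_Ici_self) Filter.tendsto_id
    have hgtend : Filter.Tendsto (fun t => f t ^ 2) Filter.atTop
        (nhds (f 0 ^ 2 + L)) := by
      have : Filter.Tendsto (fun t => f 0 ^ 2 + ∫ s in (0:ℝ)..t, p s)
          Filter.atTop (nhds (f 0 ^ 2 + L)) := tendsto_const_nhds.add htend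
      refine this.congr' ?_
      filter_upwards [Filter.eventually_ge_atTop (0:ℝ)] with t ht
      have := key t ht
      linarith
    set C : ℝ := f 0 ^ 2 + L with hC_def
    have hC0 : C = 0 := by
      by_contra hC
      have hCpos : 0 < C := by
        rcases lt_or_gt_of_ne hC with h | h
        · exfalso
          have : (0:ℝ) ≤ C := by
            refine le_of_tendsto_of_tendsto tendsto_const_nhds hgtend ?_
            exact Filter.Eventually.of_forall fun t => sq_nonneg _
          linarith
        · exact h
      -- eventually f t ^ 2 ≥ C/2
      have hev : ∀ᶠ t in Filter.atTop, C / 2 ≤ f t ^ 2 := by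
        exact hgtend.eventually (eventually_ge_nhds (by linarith : C / 2 < C))
      rcases (hev.and (Filter.eventually_ge_atTop (0:ℝ))).exists_forall_of_atTop
        with ⟨T, hT⟩
      have hTnn : 0 ≤ T := (hT T le_rfl).2
      have hconst : Integrable (fun _ : ℝ => C / 2)
          (volume.restrict (Set.Ici T)) := by
        refine (hfL2.mono_set (Set.Ici_subset_Ici.2 hTnn)).mono'
          aestronglyMeasurable_const ?_
        rw [ae_restrict_iff' measurableSet_Ici]
        refine Filter.Eventually.of_forall fun s hs => ?_
        have h1 := (hT s hs).1
        have : ‖C / 2‖ = C / 2 := by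
          rw [Real.norm_eq_abs, abs_of_pos (by linarith)]
        rw [this, sq_abs]
        exact h1
      rw [integrable_const_iff] at hconst
      rcases hconst with h | h
      · rcases div_eq_zero_iff.1 h with h2 | h2 <;> [exact hC h2; norm_num at h2]
      · have h := h.measure_univ_lt_top
        rw [Measure.restrict_apply_univ, Real.volume_Ici] at h
        exact (lt_irrefl _ h).elim
    rw [hC0] at hgtend
    have habs : Filter.Tendsto (fun t => |f t|) Filter.atTop (nhds 0) := by
      have : Filter.Tendsto (fun t => Real.sqrt (f t ^ 2)) Filter.atTop
          (nhds (Real.sqrt 0)) := (Real.continuous_sqrt.tendsto 0).comp hgtend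
      simpa [Real.sqrt_sq_eq_abs, Real.sqrt_zero] using this
    exact tendsto_zero_iff_abs_tendsto_zero f |>.2 habs
end

section
/- Let f : [0,∞) → ℝ be differentiable on [0,∞) with derivative f'. Suppose there exists p with 0 < p < ∞ such that ∫₀^∞ |f(s)|ᵖ ds < ∞ (i.e., f ∈ Lᵖ), and suppose f' is bounded on [0,∞) (i.e., f' ∈ L∞). Then lim_{t→∞} f(t) = 0. -/
open MeasureTheory Set Filter

/-- Tao's Lemma 2.15: if `f ∈ Lᵖ` on `[0,∞)` for some `0 < p < ∞` and `f'`
is bounded on `[0,∞)`, then `f(t) → 0`. -/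
theorem tao_lemma_2_15
    (f f' : ℝ → ℝ)
    (hderiv : ∀ t ∈ Set.Ici (0:ℝ), HasDerivWithinAt f (f' t) (Set.Ici 0) t)
    (hLp : ∃ p : ℝ, 0 < p ∧
      MeasureTheory.IntegrableOn (fun s => |f s| ^ p) (Set.Ici 0))
    (hbdd : ∃ C : ℝ, ∀ t ∈ Set.Ici (0:ℝ), |f' t| ≤ C) :
    Filter.Tendsto f Filter.atTop (nhds 0) := by
  obtain ⟨p, hp, hint⟩ := hLp
  obtain ⟨C, hC⟩ := hbdd
  set C' : ℝ := max C 1 with hC'def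
  have hC'1 : (1:ℝ) ≤ C' := le_max_right _ _
  have hC'0 : (0:ℝ) < C' := lt_of_lt_of_le one_pos hC'1
  set g : ℝ → ℝ := fun s => |f s| ^ p with hg
  have hg0 : ∀ s, 0 ≤ g s := fun s => Real.rpow_nonneg (abs_nonneg _) _
  -- Lipschitz bound from MVT
  have hlip : ∀ x ∈ Set.Ici (0:ℝ), ∀ y ∈ Set.Ici (0:ℝ),
      ‖f y - f x‖ ≤ C' * ‖y - x‖ := by
    intro x hx y hy
    exact (convex_Ici (0:ℝ)).norm_image_sub_le_of_norm_hasDerivWithin_le hderiv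
      (fun t ht => le_trans (by simpa using hC t ht) (le_max_left _ _)) hx hy
  by_contra hcon
  rw [Metric.tendsto_atTop] at hcon
  push_neg at hcon
  obtain ⟨ε, hε, hfreq⟩ := hcon
  set δ : ℝ := ε / (2 * C') with hδdef
  have hδ0 : 0 < δ := div_pos hε (by positivity)
  -- tail integral tends to 0
  have htail : Tendsto (fun n : ℕ => ∫ s in Set.Ici (n:ℝ), g s) atTop (nhds 0) := by
    have hanti : Antitone fun n : ℕ => Set.Ici (n:ℝ) := by
      intro m n hmn
      exact Set.Ici_subset_Ici.2 (by exact_mod_cast hmn)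
    have h0 : IntegrableOn g (Set.Ici ((0:ℕ):ℝ)) := by simpa using hint
    have := Antitone.tendsto_setIntegral (μ := volume) (f := g)
      (fun n : ℕ => measurableSet_Ici) hanti h0
    have hempty : (⋂ n : ℕ, Set.Ici ((n:ℕ):ℝ)) = ∅ := by
      ext x
      simp only [Set.mem_iInter, Set.mem_Ici, Set.mem_empty_iff_false, iff_false, not_forall,
        not_le]
      obtain ⟨n, hn⟩ := exists_nat_gt x
      exact ⟨n, hn⟩
    rw [hempty] at this
    simpa using this
  -- each tail integral is bounded below by a fixed positive constant
  set c : ℝ := (ε / 2) ^ p * δ with hcdef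
  have hc0 : 0 < c := mul_pos (Real.rpow_pos_of_pos (by linarith) _) hδ0
  have hlb : ∀ n : ℕ, c ≤ ∫ s in Set.Ici (n:ℝ), g s := by
    intro n
    obtain ⟨t, ht, hft⟩ := hfreq (n:ℝ)
    have ht0 : (0:ℝ) ≤ t := le_trans (Nat.cast_nonneg n) ht
    have hft' : ε ≤ |f t| := by simpa [Real.dist_eq] using hft
    -- on [t, t+δ], |f| ≥ ε/2
    have hlow : ∀ s ∈ Set.Icc t (t + δ), ε / 2 ≤ |f s| := by
      intro s hs
      have hs0 : (0:ℝ) ≤ s := le_trans ht0 hs.1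
      have hdiff : |f s - f t| ≤ C' * |s - t| := by
        simpa [Real.norm_eq_abs] using hlip t ht0 s hs0
      have hst : |s - t| ≤ δ := by
        rw [abs_of_nonneg (by linarith [hs.1])]
        linarith [hs.2]
      have h1 : |f s - f t| ≤ C' * δ := le_trans hdiff (by nlinarith)
      have h2 : C' * δ = ε / 2 := by
        rw [hδdef]; field_simp
      have := abs_sub_abs_le_abs_sub (f t) (f s)
      rw [abs_sub_comm] at this
      linarith [h1, h2 ▸ h1]
    -- lower bound for integral over [t, t+δ]
    have hIccInt : IntegrableOn g (Set.Icc t (t + δ)) :=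
      hint.mono_set (fun s hs => le_trans ht0 hs.1)
    have hlb1 : c ≤ ∫ s in Set.Icc t (t + δ), g s := by
      have hconst : ∀ s ∈ Set.Icc t (t + δ), (ε / 2) ^ p ≤ g s := by
        intro s hs
        exact Real.rpow_le_rpow (by linarith) (hlow s hs) hp.le
      have := setIntegral_ge_of_const_le (μ := volume) (c := (ε / 2) ^ p)
        measurableSet_Icc (by simp [Real.volume_Icc]) hconst hIccInt
      rw [measureReal_def, Real.volume_Icc, smul_eq_mul, mul_comm] at this
      have hvol : (ENNReal.ofReal (t + δ - t)).toReal = δ := by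
        rw [ENNReal.toReal_ofReal (by linarith)]; ring
      rw [hvol] at this
      exact this
    have hmono : ∫ s in Set.Icc t (t + δ), g s ≤ ∫ s in Set.Ici (n:ℝ), g s := by
      apply setIntegral_mono_set (hint.mono_set (Set.Ici_subset_Ici.2 (Nat.cast_nonneg n)))
        (Filter.Eventually.of_forall hg0)
      exact HasSubset.Subset.eventuallyLE (fun s hs => le_trans ht hs.1)
    linarith
  -- contradiction
  have := (htail.eventually (eventually_lt_nhds hc0)).exists
  obtain ⟨n, hn⟩ := this
  exact absurd (hlb n) (not_le.2 hn)
end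

section
/- Let f : [0,∞) → ℝ be uniformly continuous, and suppose there exists p with 0 < p < ∞ such that ∫₀^∞ |f(s)|ᵖ ds < ∞ (i.e., f ∈ Lᵖ). Then lim_{t→∞} f(t) = 0. -/
open MeasureTheory Set Filter

/-- Relaxed Tao Lemma 2.15: if `f` is uniformly continuous on `[0,∞)` and
`f ∈ Lᵖ` for some `0 < p < ∞`, then `f(t) → 0`. -/
theorem tao_lemma_2_15_uniformly_continuous
    (f : ℝ → ℝ)
    (huc : UniformContinuousOn f (Set.Ici 0))
    (hLp : ∃ p : ℝ, 0 < p ∧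
      MeasureTheory.IntegrableOn (fun s => |f s| ^ p) (Set.Ici 0)) :
    Filter.Tendsto f Filter.atTop (nhds 0) := by
  obtain ⟨p, hp, hInt⟩ := hLp
  set g : ℝ → ℝ := fun s => |f s| ^ p with hg
  have hg0 : ∀ s, 0 ≤ g s := fun s => Real.rpow_nonneg (abs_nonneg _) p
  by_contra hne
  rw [Metric.tendsto_atTop] at hne
  push_neg at hne
  obtain ⟨ε, hε, hbad⟩ := hne
  obtain ⟨δ, hδ, hδ'⟩ := Metric.uniformContinuousOn_iff.mp huc (ε/2) (by linarith)
  set δ' : ℝ := δ / 2 with hδ'def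
  have hδ'pos : 0 < δ' := by positivity
  -- integrability on Ioi 0
  have hIntIoi : IntegrableOn g (Ioi 0) := hInt.mono_set Ioi_subset_Ici_self
  set I : ℝ := ∫ s in Ioi (0:ℝ), g s with hI
  have hF : Tendsto (fun t => ∫ s in (0:ℝ)..t, g s) atTop (nhds I) :=
    MeasureTheory.intervalIntegral_tendsto_integral_Ioi 0 hIntIoi tendsto_id
  have hFle : ∀ t : ℝ, 0 ≤ t → (∫ s in (0:ℝ)..t, g s) ≤ I := by
    intro t ht
    rw [intervalIntegral.integral_of_le ht]
    exact setIntegral_mono_set hIntIoi (Filter.Eventually.of_forall fun s => hg0 s)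
      (Filter.Eventually.of_forall Ioc_subset_Ioi_self)
  set c : ℝ := δ' * (ε/2) ^ p with hc
  have hcpos : 0 < c := mul_pos hδ'pos (Real.rpow_pos_of_pos (by linarith) p)
  -- eventually F t > I - c
  have hev : ∀ᶠ t in atTop, I - c < ∫ s in (0:ℝ)..t, g s :=
    hF.eventually (eventually_gt_nhds (by linarith))
  obtain ⟨N, hN⟩ := hev.exists_forall_of_atTop
  obtain ⟨t, ht, htbad⟩ := hbad (max N 0)
  have htN : N ≤ t := le_trans (le_max_left _ _) ht
  have ht0 : (0:ℝ) ≤ t := le_trans (le_max_right _ _) ht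
  rw [Real.dist_eq, sub_zero] at htbad
  -- lower bound on |f s| near t
  have hfs : ∀ s ∈ Ioc t (t + δ'), ε/2 ≤ |f s| := by
    intro s hs
    have hs0 : (0:ℝ) ≤ s := le_trans ht0 hs.1.le
    have hdist : dist s t < δ := by
      rw [Real.dist_eq, abs_of_nonneg (by linarith [hs.1.le])]
      have := hs.2
      simp only [hδ'def] at this ⊢
      linarith
    have := hδ' s hs0 t ht0 hdist
    rw [Real.dist_eq] at this
    have h1 : |f t| - |f s| ≤ |f s - f t| := by
      have := abs_sub_abs_le_abs_sub (f t) (f s)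
      rwa [abs_sub_comm] at this
    linarith [le_trans h1 this.le, htbad]
  -- integrability on the small interval
  have hIntOc : IntegrableOn g (Ioc t (t + δ')) :=
    hInt.mono_set (fun s hs => le_trans ht0 hs.1.le)
  -- lower bound on the integral over the small interval
  have hlb : c ≤ ∫ s in Ioc t (t + δ'), g s := by
    have h1 : (∫ _ in Ioc t (t + δ'), (ε/2)^p) ≤ ∫ s in Ioc t (t + δ'), g s := by
      refine setIntegral_mono_on ((integrableOn_const_iff enorm_ne_top).mpr (Or.inr ?_)) hIntOc
        measurableSet_Ioc ?_
      · rw [Real.volume_Ioc]; exact ENNReal.ofReal_lt_top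
      · intro s hs
        exact Real.rpow_le_rpow (by linarith) (hfs s hs) hp.le
    rw [setIntegral_const, Real.volume_real_Ioc_of_le (by linarith), smul_eq_mul] at h1
    calc c = (t + δ' - t) * (ε/2)^p := by rw [hc]; ring
    _ ≤ ∫ s in Ioc t (t + δ'), g s := h1
  -- the integral over the small interval equals F(t+δ') - F(t)
  have hii : ∀ a b : ℝ, 0 ≤ a → a ≤ b → IntervalIntegrable g volume a b := by
    intro a b ha hab
    rw [intervalIntegrable_iff_integrableOn_Ioc_of_le hab]
    exact hInt.mono_set (fun s hs => le_trans ha hs.1.le)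
  have hsplit : (∫ s in (0:ℝ)..t, g s) + (∫ s in t..(t+δ'), g s)
      = ∫ s in (0:ℝ)..(t+δ'), g s :=
    intervalIntegral.integral_add_adjacent_intervals (hii 0 t le_rfl ht0)
      (hii t (t+δ') ht0 (by linarith))
  have heq : (∫ s in Ioc t (t + δ'), g s)
      = (∫ s in (0:ℝ)..(t+δ'), g s) - ∫ s in (0:ℝ)..t, g s := by
    rw [← hsplit, ← intervalIntegral.integral_of_le (by linarith : t ≤ t + δ')]
    ring
  have h2 := hFle (t + δ') (by linarith)
  have h3 := hN t htN
  rw [heq] at hlb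
  linarith
end

section
/- Let f : [0,∞) → ℝ be differentiable on [0,∞) with derivative f'. Suppose there exist p ∈ [1,∞) and q ∈ (1,∞) such that ∫₀^∞ |f(s)|ᵖ ds < ∞ (i.e., f ∈ Lᵖ) and ∫₀^∞ |f'(s)|^q ds < ∞ (i.e., f' ∈ L^q). Then f is bounded on [0,∞), f is uniformly continuous, and lim_{t→∞} f(t) = 0. -/
open MeasureTheory Set Filter

lemma fw_abs_le {x K q : ℝ} (hK : 0 < K) (hq : 1 < q) :
    |x| ≤ K + K ^ (1 - q) * |x| ^ q := by
  have hx0 : (0:ℝ) ≤ |x| := abs_nonneg x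
  have hc : (0:ℝ) ≤ K ^ (1 - q) * |x| ^ q :=
    mul_nonneg (Real.rpow_nonneg hK.le _) (Real.rpow_nonneg hx0 _)
  rcases le_or_gt |x| K with h | h
  · linarith
  · have hxpos : 0 < |x| := hK.trans h
    have h1 : |x| * K ^ (q - 1) ≤ |x| * |x| ^ (q - 1) := by
      apply mul_le_mul_of_nonneg_left _ hx0
      exact Real.rpow_le_rpow hK.le h.le (by linarith)
    have h2 : |x| * |x| ^ (q - 1) = |x| ^ q := by
      rw [← Real.rpow_one_add' (by positivity) (by intro hc; simp at hc; linarith)]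
      ring_nf
    have h3 : K ^ (1 - q) * K ^ (q - 1) = 1 := by
      rw [← Real.rpow_add hK]; simp
    have h4 : K ^ (1 - q) * (|x| * K ^ (q - 1)) ≤ K ^ (1 - q) * |x| ^ q := by
      apply mul_le_mul_of_nonneg_left _ (Real.rpow_nonneg hK.le _)
      rw [h2] at h1; exact h1
    calc |x| = K ^ (1 - q) * K ^ (q - 1) * |x| := by rw [h3]; ring
    _ = K ^ (1 - q) * (|x| * K ^ (q - 1)) := by ring
    _ ≤ K ^ (1 - q) * |x| ^ q := h4
    _ ≤ K + K ^ (1 - q) * |x| ^ q := by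
        nlinarith [Real.rpow_nonneg hK.le (1-q), Real.rpow_nonneg hx0 q]

lemma fw_key (f f' : ℝ → ℝ) {q : ℝ} (hq : 1 < q)
    (hderiv : ∀ t ∈ Set.Ici (0:ℝ), HasDerivWithinAt f (f' t) (Set.Ici 0) t)
    (hm : AEStronglyMeasurable f' (volume.restrict (Set.Ici 0)))
    (hq' : IntegrableOn (fun s => |f' s| ^ q) (Set.Ici 0))
    {a b K : ℝ} (ha : 0 ≤ a) (hab : a ≤ b) (hK : 0 < K) :
    |f b - f a| ≤ K * (b - a) + K ^ (1 - q) * ∫ s in Set.Ici (0:ℝ), |f' s| ^ q := by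
  have habs : ∀ x, (0:ℝ) ≤ |f' x| ^ q := fun x => Real.rpow_nonneg (abs_nonneg _) _
  have hIccIci : Icc a b ⊆ Ici (0:ℝ) := fun x hx => le_trans ha hx.1
  have hqIcc : IntegrableOn (fun s => |f' s| ^ q) (Icc a b) := hq'.mono_set hIccIci
  -- integrability of f' on [a,b]
  have hmIcc : AEStronglyMeasurable f' (volume.restrict (Icc a b)) :=
    hm.mono_measure (Measure.restrict_mono hIccIci le_rfl)
  have hbound : IntegrableOn (fun s => 1 + |f' s| ^ q) (Icc a b) :=
    (integrableOn_const (by simp)).add hqIcc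
  have hint : IntegrableOn f' (Icc a b) := by
    apply hbound.mono' hmIcc
    filter_upwards with x
    rcases le_or_gt |f' x| 1 with h | h
    · have := habs x; simp only [Real.norm_eq_abs]; linarith
    · have h2 : |f' x| ≤ |f' x| ^ q := by
        nth_rewrite 1 [← Real.rpow_one |f' x|]
        exact Real.rpow_le_rpow_of_exponent_le h.le hq.le
      simp only [Real.norm_eq_abs]; linarith
  have hintI : IntervalIntegrable f' volume a b :=
    (intervalIntegrable_iff_integrableOn_Icc_of_le hab).2 hint
  -- FTC
  have hftc : ∫ y in a..b, f' y = f b - f a := by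
    apply intervalIntegral.integral_eq_sub_of_hasDeriv_right_of_le hab
    · exact fun x hx => ((hderiv x (hIccIci hx)).continuousWithinAt).mono hIccIci
    · intro x hx
      exact (hderiv x (le_trans ha hx.1.le)).mono
        (fun y hy => le_trans (le_trans ha hx.1.le) (le_of_lt hy))
    · exact hintI
  rw [← hftc]
  calc |∫ y in a..b, f' y| ≤ ∫ y in a..b, |f' y| := by
        simpa using intervalIntegral.norm_integral_le_integral_norm (f := f') hab
  _ ≤ ∫ y in a..b, (K + K ^ (1 - q) * |f' y| ^ q) := by
      apply intervalIntegral.integral_mono_on hab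
      · exact hintI.abs
      · apply IntervalIntegrable.add intervalIntegrable_const
        exact (((intervalIntegrable_iff_integrableOn_Icc_of_le hab).2 hqIcc).const_mul _)
      · exact fun x _ => fw_abs_le hK hq
  _ = K * (b - a) + K ^ (1 - q) * ∫ y in a..b, |f' y| ^ q := by
      rw [intervalIntegral.integral_add intervalIntegrable_const
        (((intervalIntegrable_iff_integrableOn_Icc_of_le hab).2 hqIcc).const_mul _)]
      simp [intervalIntegral.integral_const_mul, smul_eq_mul, mul_comm]
  _ ≤ K * (b - a) + K ^ (1 - q) * ∫ s in Set.Ici (0:ℝ), |f' s| ^ q := by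
      gcongr K * (b-a) + K ^ (1-q) * ?_
      rw [intervalIntegral.integral_of_le hab]
      apply setIntegral_mono_set hq'
      · filter_upwards with x using habs x
      · exact HasSubset.Subset.eventuallyLE (fun x hx => le_trans ha hx.1.le)

lemma fw_uc (f : ℝ → ℝ) {q A : ℝ} (hq : 1 < q)
    (key : ∀ {a b K : ℝ}, 0 ≤ a → a ≤ b → 0 < K →
      |f b - f a| ≤ K * (b - a) + K ^ (1 - q) * A) :
    UniformContinuousOn f (Set.Ici 0) := by
  rw [Metric.uniformContinuousOn_iff]
  intro ε hε
  have htend : Tendsto (fun K : ℝ => K ^ (1 - q) * A) atTop (nhds 0) := by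
    have h1 : Tendsto (fun K : ℝ => K ^ (-(q - 1))) atTop (nhds 0) :=
      tendsto_rpow_neg_atTop (by linarith)
    have h2 := h1.mul_const A
    rw [zero_mul] at h2
    convert h2 using 2 with K
    ring_nf
  have hev : ∀ᶠ K in (atTop : Filter ℝ), K ^ (1 - q) * A < ε / 2 :=
    htend.eventually_lt_const (by linarith)
  obtain ⟨K, hKε, hK0⟩ := (hev.and (eventually_gt_atTop 0)).exists
  refine ⟨ε / (2 * K), by positivity, fun x hx y hy hxy => ?_⟩
  have main : ∀ u v : ℝ, u ∈ Ici (0:ℝ) → v ∈ Ici (0:ℝ) → u ≤ v →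
      dist v u < ε / (2 * K) → dist (f v) (f u) < ε := by
    intro u v hu hv huv hd
    rw [Real.dist_eq] at hd ⊢
    have h1 : |f v - f u| ≤ K * (v - u) + K ^ (1 - q) * A := key hu huv hK0
    have h2 : v - u < ε / (2 * K) := by
      rw [abs_of_nonneg (by linarith)] at hd; exact hd
    have h3 : K * (v - u) < K * (ε / (2 * K)) := by
      apply mul_lt_mul_of_pos_left h2 hK0
    have h4 : K * (ε / (2 * K)) = ε / 2 := by field_simp
    linarith
  rcases le_total x y with h | h
  · have := main x y hx hy h (by rwa [dist_comm] at hxy)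
    rwa [dist_comm]
  · exact main y x hy hx h hxy

lemma fw_tendsto (f : ℝ → ℝ) {p : ℝ} (hp : 1 ≤ p)
    (hfp : IntegrableOn (fun s => |f s| ^ p) (Set.Ici 0))
    (huc : UniformContinuousOn f (Set.Ici 0)) :
    Tendsto f atTop (nhds 0) := by
  by_contra hcon
  rw [Metric.tendsto_atTop] at hcon
  push_neg at hcon
  obtain ⟨ε, hε, hN⟩ := hcon
  obtain ⟨δ, hδ, hδ'⟩ := Metric.uniformContinuousOn_iff.1 huc (ε / 2) (by linarith)
  -- choose points escaping to infinity where |f| ≥ ε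
  have hch : ∀ n : ℕ, ∃ t : ℝ, (n:ℝ) ≤ t ∧ ε ≤ |f t| := by
    intro n
    obtain ⟨t, ht1, ht2⟩ := hN n
    exact ⟨t, ht1, by simpa [Real.dist_eq] using ht2⟩
  choose t ht1 ht2 using hch
  have ht0 : ∀ n, (0:ℝ) ≤ t n := fun n => le_trans (Nat.cast_nonneg n) (ht1 n)
  -- on [t n, t n + δ/2], |f| ≥ ε/2
  have hlow : ∀ n, ∀ s ∈ Icc (t n) (t n + δ/2), ε/2 ≤ |f s| := by
    intro n s hs
    have hs0 : (0:ℝ) ≤ s := le_trans (ht0 n) hs.1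
    have hd : dist s (t n) < δ := by
      rw [Real.dist_eq, abs_of_nonneg (by linarith [hs.1])]
      linarith [hs.2]
    have := hδ' s hs0 (t n) (ht0 n) hd
    rw [Real.dist_eq] at this
    have h2 := abs_sub_abs_le_abs_sub (f (t n)) (f s)
    rw [abs_sub_comm] at h2
    linarith [ht2 n]
  -- integral over each interval is at least c
  set c : ℝ := (δ/2) * (ε/2) ^ p with hc
  have hcpos : 0 < c := by
    have : (0:ℝ) < (ε/2) ^ p := Real.rpow_pos_of_pos (by linarith) p
    positivity
  have habs : ∀ x, (0:ℝ) ≤ |f x| ^ p := fun x => Real.rpow_nonneg (abs_nonneg _) _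
  have hII : ∀ a b : ℝ, 0 ≤ a → a ≤ b → IntervalIntegrable (fun s => |f s| ^ p) volume a b := by
    intro a b ha hab
    exact (intervalIntegrable_iff_integrableOn_Icc_of_le hab).2
      (hfp.mono_set (fun x hx => le_trans ha hx.1))
  have hint : ∀ n, c ≤ ∫ s in (t n)..(t n + δ/2), |f s| ^ p := by
    intro n
    have h1 : ∫ s in (t n)..(t n + δ/2), (ε/2) ^ p ≤ ∫ s in (t n)..(t n + δ/2), |f s| ^ p := by
      apply intervalIntegral.integral_mono_on (by linarith) intervalIntegrable_const
        (hII _ _ (ht0 n) (by linarith))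
      intro x hx
      exact Real.rpow_le_rpow (by linarith) (hlow n x hx) (by linarith)
    rw [intervalIntegral.integral_const, smul_eq_mul] at h1
    calc c = (t n + δ/2 - t n) * (ε/2) ^ p := by rw [hc]; ring_nf
    _ ≤ _ := h1
  -- F converges
  set I : ℝ := ∫ s in Ioi (0:ℝ), |f s| ^ p with hI
  have htt : Tendsto t atTop atTop :=
    tendsto_atTop_mono ht1 tendsto_natCast_atTop_atTop
  have htt2 : Tendsto (fun n => t n + δ/2) atTop atTop :=
    tendsto_atTop_add_const_right _ _ htt
  have hIoi : IntegrableOn (fun s => |f s| ^ p) (Ioi 0) := hfp.mono_set Ioi_subset_Ici_self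
  have hF1 : Tendsto (fun n => ∫ s in (0:ℝ)..(t n), |f s| ^ p) atTop (nhds I) :=
    intervalIntegral_tendsto_integral_Ioi 0 hIoi htt
  have hF2 : Tendsto (fun n => ∫ s in (0:ℝ)..(t n + δ/2), |f s| ^ p) atTop (nhds I) :=
    intervalIntegral_tendsto_integral_Ioi 0 hIoi htt2
  have hdiff : Tendsto (fun n => (∫ s in (0:ℝ)..(t n + δ/2), |f s| ^ p)
      - ∫ s in (0:ℝ)..(t n), |f s| ^ p) atTop (nhds 0) := by
    have := hF2.sub hF1; rwa [sub_self] at this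
  have hge : ∀ n, c ≤ (∫ s in (0:ℝ)..(t n + δ/2), |f s| ^ p)
      - ∫ s in (0:ℝ)..(t n), |f s| ^ p := by
    intro n
    have hadd : (∫ s in (0:ℝ)..(t n), |f s| ^ p) + (∫ s in (t n)..(t n + δ/2), |f s| ^ p)
        = ∫ s in (0:ℝ)..(t n + δ/2), |f s| ^ p :=
      intervalIntegral.integral_add_adjacent_intervals (hII _ _ le_rfl (ht0 n))
        (hII _ _ (ht0 n) (by linarith))
    have := hint n
    linarith
  have : c ≤ 0 := ge_of_tendsto' hdiff hge
  linarith

/-- Farkas–Wegner (finite `q` case): if `f ∈ Lᵖ` with `p ∈ [1,∞)` and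
`f' ∈ L^q` with `q ∈ (1,∞)`, then `f` is bounded and uniformly continuous
on `[0,∞)`, and `f(t) → 0`. -/
theorem farkas_wegner_finite_q
    (f f' : ℝ → ℝ)
    (hderiv : ∀ t ∈ Set.Ici (0:ℝ), HasDerivWithinAt f (f' t) (Set.Ici 0) t)
    (hLp : ∃ p : ℝ, 1 ≤ p ∧
      MeasureTheory.IntegrableOn (fun s => |f s| ^ p) (Set.Ici 0))
    (hLq : ∃ q : ℝ, 1 < q ∧
      MeasureTheory.IntegrableOn (fun s => |f' s| ^ q) (Set.Ici 0)) :
    (∃ M : ℝ, ∀ t ∈ Set.Ici (0:ℝ), |f t| ≤ M) ∧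
      UniformContinuousOn f (Set.Ici 0) ∧
      Filter.Tendsto f Filter.atTop (nhds 0) := by
  obtain ⟨p, hp, hfp⟩ := hLp
  obtain ⟨q, hq, hfq⟩ := hLq
  -- measurability of f'
  have hm : AEStronglyMeasurable f' (volume.restrict (Set.Ici 0)) := by
    have h0 : volume.restrict (Ici (0:ℝ)) = volume.restrict (Ioi 0) :=
      Measure.restrict_congr_set Ioi_ae_eq_Ici.symm
    rw [h0]
    apply (measurable_deriv f).aestronglyMeasurable.congr
    rw [Filter.EventuallyEq, ae_restrict_iff' measurableSet_Ioi]
    filter_upwards with x hx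
    exact ((hderiv x (Set.mem_Ici.2 (le_of_lt hx))).hasDerivAt (Ici_mem_nhds hx)).deriv
  have key : ∀ {a b K : ℝ}, 0 ≤ a → a ≤ b → 0 < K →
      |f b - f a| ≤ K * (b - a) + K ^ (1 - q) * ∫ s in Set.Ici (0:ℝ), |f' s| ^ q :=
    fun ha hab hK => fw_key f f' hq hderiv hm hfq ha hab hK
  have huc : UniformContinuousOn f (Set.Ici 0) := fw_uc f hq key
  have htend : Tendsto f atTop (nhds 0) := fw_tendsto f hp hfp huc
  refine ⟨?_, huc, htend⟩
  -- boundedness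
  obtain ⟨N, hNb⟩ := (Metric.tendsto_atTop.1 htend) 1 one_pos
  have hcontOn : ContinuousOn f (Icc 0 (max N 0)) := fun x hx =>
    ((hderiv x hx.1).continuousWithinAt).mono (fun y hy => hy.1)
  obtain ⟨C, hC⟩ := (isCompact_Icc).exists_bound_of_continuousOn hcontOn
  refine ⟨max C 1, fun s hs => ?_⟩
  rcases le_total s (max N 0) with h | h
  · exact le_trans (by simpa using hC s ⟨hs, h⟩) (le_max_left _ _)
  · have : dist (f s) 0 < 1 := hNb s (le_trans (le_max_left N 0) h)
    rw [Real.dist_eq, sub_zero] at this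
    exact le_trans this.le (le_max_right _ _)
end

section
/- Let f : [0,∞) → ℝ be differentiable on [0,∞) with derivative f'. Suppose there exists p ∈ [1,∞) such that ∫₀^∞ |f(s)|ᵖ ds < ∞ (i.e., f ∈ Lᵖ) and f' is bounded on [0,∞) (i.e., f' ∈ L∞). Then f is bounded on [0,∞), f is uniformly continuous, and lim_{t→∞} f(t) = 0. -/
open MeasureTheory Set

/-- Interval integrability on a subinterval of `[0,∞)`. -/
lemma fw_ii (g : ℝ → ℝ) (hInt : IntegrableOn g (Ici 0))
    {b c : ℝ} (hb : 0 ≤ b) (hbc : b ≤ c) : IntervalIntegrable g volume b c := by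
  apply (hInt.mono_set ?_).intervalIntegrable
  rw [uIcc_of_le hbc]
  exact fun x hx => le_trans hb hx.1

/-- Integral over a subinterval is at most the full integral, for nonneg integrands. -/
lemma fw_upper (g : ℝ → ℝ) (hg : ∀ s, 0 ≤ g s)
    (hInt : IntegrableOn g (Ici 0)) {b c : ℝ} (hb : 0 ≤ b) (hbc : b ≤ c) :
    ∫ s in b..c, g s ≤ ∫ s in Ici (0:ℝ), g s := by
  rw [intervalIntegral.integral_of_le hbc]
  exact setIntegral_mono_set hInt (ae_of_all _ hg)
    (HasSubset.Subset.eventuallyLE (fun x hx => le_trans hb hx.1.le))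

/-- Quantitative lower bound: if `|f t| ≥ ε` and `f` is `C'`-Lipschitz, then
the `p`-integral over `[t, t + ε/(2C')]` is at least `(ε/2)^p · ε/(2C')`. -/
lemma fw_lower (f : ℝ → ℝ) (C' p : ℝ) (hC' : 0 < C') (hp : 1 ≤ p)
    (hlip : ∀ s ∈ Ici (0:ℝ), ∀ u ∈ Ici (0:ℝ), |f s - f u| ≤ C' * |s - u|)
    (hInt : IntegrableOn (fun s => |f s| ^ p) (Ici 0))
    {t ε : ℝ} (ht : 0 ≤ t) (hε : 0 < ε) (ha : ε ≤ |f t|) :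
    (ε/2) ^ p * (ε/(2*C')) ≤ ∫ s in t..(t + ε/(2*C')), |f s| ^ p := by
  set w := ε/(2*C') with hw
  have hw0 : 0 < w := by positivity
  have hii : IntervalIntegrable (fun s => |f s| ^ p) volume t (t + w) :=
    fw_ii _ hInt ht (by linarith)
  have hpt : ∀ s ∈ Icc t (t + w), (ε/2) ^ p ≤ |f s| ^ p := by
    intro s hs
    apply Real.rpow_le_rpow (by positivity) ?_ (by linarith)
    have h1 := hlip t ht s (le_trans ht hs.1)
    have h2 : |t - s| ≤ w := by
      rw [abs_sub_comm, abs_of_nonneg (by linarith [hs.1])]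
      linarith [hs.2]
    have h3 : |f t - f s| ≤ C' * w := le_trans h1 (by nlinarith)
    have hcw : C' * w = ε / 2 := by
      rw [hw]; field_simp
    have h4 := abs_sub_abs_le_abs_sub (f t) (f s)
    linarith
  calc (ε/2) ^ p * w = ∫ _ in t..(t + w), (ε/2) ^ p := by
        rw [intervalIntegral.integral_const, smul_eq_mul]; ring_nf
    _ ≤ ∫ s in t..(t + w), |f s| ^ p :=
        intervalIntegral.integral_mono_on (by linarith) intervalIntegrable_const hii hpt

/-- Farkas–Wegner (`q = ∞` case): if `f ∈ Lᵖ` with `p ∈ [1,∞)` and `f'` is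
bounded on `[0,∞)`, then `f` is bounded and uniformly continuous on `[0,∞)`,
and `f(t) → 0`. -/
theorem farkas_wegner_q_infty
    (f f' : ℝ → ℝ)
    (hderiv : ∀ t ∈ Set.Ici (0:ℝ), HasDerivWithinAt f (f' t) (Set.Ici 0) t)
    (hLp : ∃ p : ℝ, 1 ≤ p ∧
      MeasureTheory.IntegrableOn (fun s => |f s| ^ p) (Set.Ici 0))
    (hbdd : ∃ C : ℝ, ∀ t ∈ Set.Ici (0:ℝ), |f' t| ≤ C) :
    (∃ M : ℝ, ∀ t ∈ Set.Ici (0:ℝ), |f t| ≤ M) ∧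
      UniformContinuousOn f (Set.Ici 0) ∧
      Filter.Tendsto f Filter.atTop (nhds 0) := by
  obtain ⟨p, hp, hInt⟩ := hLp
  obtain ⟨C, hC⟩ := hbdd
  set C' := max C 1 with hC'def
  have hC' : (0:ℝ) < C' := lt_of_lt_of_le one_pos (le_max_right _ _)
  have hlip : ∀ s ∈ Ici (0:ℝ), ∀ u ∈ Ici (0:ℝ), |f s - f u| ≤ C' * |s - u| := by
    intro s hs u hu
    have hb : ∀ x ∈ Ici (0:ℝ), ‖f' x‖ ≤ C' := fun x hx =>
      le_trans (by simpa [Real.norm_eq_abs] using hC x hx) (le_max_left _ _)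
    have := (convex_Ici (0:ℝ)).norm_image_sub_le_of_norm_hasDerivWithin_le
      hderiv hb hu hs
    simpa [Real.norm_eq_abs] using this
  have hg0 : ∀ s, 0 ≤ |f s| ^ p := fun s => Real.rpow_nonneg (abs_nonneg _) p
  set I := ∫ s in Ici (0:ℝ), |f s| ^ p with hI
  have hI0 : 0 ≤ I :=
    setIntegral_nonneg measurableSet_Ici (fun x _ => hg0 x)
  -- Boundedness
  have hbound : ∀ t ∈ Set.Ici (0:ℝ), |f t| ≤ max 2 (Real.sqrt (4 * C' * I)) := by
    intro t ht
    rcases le_or_gt (|f t|) 2 with h | h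
    · exact le_trans h (le_max_left _ _)
    · refine le_trans ?_ (le_max_right _ _)
      set a := |f t| with hadef
      have ha0 : (0:ℝ) < a := by linarith
      have hlow := fw_lower f C' p hC' hp hlip hInt ht ha0 le_rfl
      have hup := fw_upper (fun s => |f s| ^ p) hg0 hInt ht
        (show t ≤ t + a/(2*C') from le_add_of_nonneg_right (by positivity))
      have key : (a/2) ^ p * (a/(2*C')) ≤ I := le_trans hlow hup
      have h1 : a/2 ≤ (a/2) ^ p := by
        have := Real.rpow_le_rpow_of_exponent_le (by linarith : (1:ℝ) ≤ a/2) hp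
        simpa [Real.rpow_one] using this
      have h2 : a/2 * (a/(2*C')) ≤ I := by
        refine le_trans ?_ key
        have hpos : (0:ℝ) < a/(2*C') := by positivity
        nlinarith
      have h3 : a ^ 2 ≤ 4 * C' * I := by
        have := mul_le_mul_of_nonneg_left h2 (le_of_lt (by positivity : (0:ℝ) < 4*C'))
        calc a ^ 2 = 4 * C' * (a/2 * (a/(2*C'))) := by field_simp; ring
          _ ≤ 4 * C' * I := by nlinarith
      exact (Real.le_sqrt ha0.le (by positivity)).mpr h3
  refine ⟨⟨_, hbound⟩, ?_, ?_⟩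
  -- Uniform continuity
  · have hL : LipschitzOnWith (Real.toNNReal C') f (Ici 0) := by
      apply LipschitzOnWith.of_dist_le_mul
      intro x hx y hy
      rw [Real.dist_eq, Real.dist_eq, Real.coe_toNNReal C' hC'.le]
      exact hlip x hx y hy
    exact hL.uniformContinuousOn
  -- Tendsto 0
  · rw [Metric.tendsto_atTop]
    intro ε hε
    set δ := (ε/2) ^ p * (ε/(2*C')) with hδ
    have hδ0 : 0 < δ := by
      have := Real.rpow_pos_of_pos (by linarith : (0:ℝ) < ε/2) p
      positivity
    have hIoi : IntegrableOn (fun s => |f s| ^ p) (Ioi 0) :=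
      hInt.mono_set Ioi_subset_Ici_self
    have hIeq : (∫ s in Ioi (0:ℝ), |f s| ^ p) = I := by
      rw [hI, MeasureTheory.integral_Ici_eq_integral_Ioi]
    have htend : Filter.Tendsto (fun b => ∫ s in (0:ℝ)..b, |f s| ^ p)
        Filter.atTop (nhds I) := by
      rw [← hIeq]
      exact MeasureTheory.intervalIntegral_tendsto_integral_Ioi 0 hIoi Filter.tendsto_id
    have hev : ∀ᶠ b in Filter.atTop, I - δ < ∫ s in (0:ℝ)..b, |f s| ^ p :=
      htend.eventually (eventually_gt_nhds (by linarith))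
    obtain ⟨T, hT⟩ := Filter.eventually_atTop.mp hev
    refine ⟨max T 0, fun t ht => ?_⟩
    have ht0 : (0:ℝ) ≤ t := le_trans (le_max_right _ _) ht
    rw [Real.dist_eq, sub_zero]
    by_contra hcon
    push_neg at hcon
    have hlow := fw_lower f C' p hC' hp hlip hInt ht0 hε hcon
    set w := ε/(2*C') with hw
    have hw0 : 0 < w := by positivity
    have hsplit : (∫ s in (0:ℝ)..t, |f s| ^ p) + ∫ s in t..(t+w), |f s| ^ p
        = ∫ s in (0:ℝ)..(t+w), |f s| ^ p :=
      intervalIntegral.integral_add_adjacent_intervals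
        (fw_ii _ hInt le_rfl ht0) (fw_ii _ hInt ht0 (by linarith))
    have h1 : I - δ < ∫ s in (0:ℝ)..t, |f s| ^ p :=
      hT t (le_trans (le_max_left _ _) ht)
    have h2 : (∫ s in (0:ℝ)..(t+w), |f s| ^ p) ≤ I :=
      fw_upper (fun s => |f s| ^ p) hg0 hInt le_rfl (by linarith)
    linarith
end

section
/- Let f : [0,∞) → ℝ be differentiable on [0,∞) with derivative f'. Suppose there exists p ∈ [1,∞) such that ∫₀^∞ |f(s)|ᵖ ds < ∞ (i.e., f ∈ Lᵖ), and suppose ∫₀^∞ |f'(s)| ds < ∞ (i.e., f' ∈ L¹). Then lim_{t→∞} f(t) = 0. -/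
open MeasureTheory Set Filter

/-- Farkas–Wegner, `q = 1` extension: if `f ∈ Lᵖ` with `p ∈ [1,∞)` and
`f' ∈ L¹` on `[0,∞)`, then `f(t) → 0`. -/
theorem farkas_wegner_q_one
    (f f' : ℝ → ℝ)
    (hderiv : ∀ t ∈ Set.Ici (0:ℝ), HasDerivWithinAt f (f' t) (Set.Ici 0) t)
    (hLp : ∃ p : ℝ, 1 ≤ p ∧
      MeasureTheory.IntegrableOn (fun s => |f s| ^ p) (Set.Ici 0))
    (hL1 : MeasureTheory.IntegrableOn (fun s => |f' s|) (Set.Ici 0)) :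
    Filter.Tendsto f Filter.atTop (nhds 0) := by
  -- f' is a.e. strongly measurable on Ici 0
  have hf'eq : ∀ t ∈ Ici (0:ℝ), f' t = derivWithin f (Ici t) t := by
    intro t ht
    exact ((hderiv t ht).mono (Ici_subset_Ici.2 ht)).derivWithin
      (uniqueDiffOn_Ici t t Set.self_mem_Ici) |>.symm
  have hf'meas : AEStronglyMeasurable f' (volume.restrict (Ici (0:ℝ))) := by
    refine (stronglyMeasurable_derivWithin_Ici f).aestronglyMeasurable.congr ?_
    filter_upwards [ae_restrict_mem measurableSet_Ici] with t ht
    exact (hf'eq t ht).symm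
  have hf'int : IntegrableOn f' (Ici (0:ℝ)) := by
    refine ⟨hf'meas, ?_⟩
    have := hL1.2
    simpa [MeasureTheory.hasFiniteIntegral_iff_norm, Real.norm_eq_abs, abs_abs] using this
  have hf'intIoi : IntegrableOn f' (Ioi (0:ℝ)) := hf'int.mono_set Ioi_subset_Ici_self
  have hcont : ContinuousOn f (Ici (0:ℝ)) := fun t ht =>
    (hderiv t ht).continuousWithinAt
  -- FTC: f t = f 0 + ∫ 0..t f'
  have hftc : ∀ t ∈ Ici (0:ℝ), ∫ s in (0:ℝ)..t, f' s = f t - f 0 := by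
    intro t ht
    refine intervalIntegral.integral_eq_sub_of_hasDeriv_right_of_le ht
      (hcont.mono (Icc_subset_Ici_self)) (fun x hx => ?_) ?_
    · exact (hderiv x (le_of_lt hx.1)).mono
        (fun y hy => le_of_lt (lt_of_le_of_lt (le_of_lt hx.1) hy))
    · exact (intervalIntegrable_iff_integrableOn_Icc_of_le ht).2 (hf'int.mono_set Icc_subset_Ici_self)
  have htendI : Tendsto (fun t => ∫ s in (0:ℝ)..t, f' s) atTop
      (nhds (∫ s in Ioi (0:ℝ), f' s)) :=
    intervalIntegral_tendsto_integral_Ioi 0 hf'intIoi tendsto_id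
  set L : ℝ := f 0 + ∫ s in Ioi (0:ℝ), f' s with hL
  have htendf : Tendsto f atTop (nhds L) := by
    have : Tendsto (fun t => f 0 + ∫ s in (0:ℝ)..t, f' s) atTop (nhds L) :=
      tendsto_const_nhds.add htendI
    refine this.congr' ?_
    filter_upwards [eventually_ge_atTop (0:ℝ)] with t ht
    have := hftc t ht
    linarith
  -- Show L = 0
  rcases hLp with ⟨p, hp1, hpint⟩
  by_contra hne
  have hLne : L ≠ 0 := by
    intro h; exact hne (h ▸ htendf)
  have hLpos : 0 < |L| ^ p := Real.rpow_pos_of_pos (abs_pos.2 hLne) p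
  -- |f t|^p tends to |L|^p
  have habs : Tendsto (fun t => |f t| ^ p) atTop (nhds (|L| ^ p)) := by
    have h1 : Tendsto (fun t => |f t|) atTop (nhds |L|) :=
      (continuous_abs.tendsto L).comp htendf
    exact (Real.continuousAt_rpow_const |L| p (Or.inl (abs_ne_zero.2 hLne))).tendsto.comp h1
  have hev : ∀ᶠ t in atTop, |L| ^ p / 2 ≤ |f t| ^ p := by
    exact habs.eventually (eventually_ge_nhds (by linarith))
  obtain ⟨T, hT⟩ := (hev.and (eventually_ge_atTop (0:ℝ))).exists_forall_of_atTop
  have hconst : IntegrableOn (fun _ : ℝ => |L| ^ p / 2) (Ici T) := by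
    refine Integrable.mono' (hpint.mono_set (fun x hx => le_trans (hT T le_rfl).2 hx)) 
      aestronglyMeasurable_const ?_
    filter_upwards [ae_restrict_mem measurableSet_Ici] with x hx
    rw [Real.norm_eq_abs, abs_of_pos (by linarith)]
    exact (hT x hx).1
  have := ((integrableOn_const_iff enorm_ne_top).1 hconst).resolve_left (by rw [enorm_eq_zero]; positivity)
  rw [Real.volume_Ici] at this
  exact (lt_irrefl _ this).elim
end

section
/- Let α : [0,∞) → [0,∞) be continuous, nondecreasing, with α(0) = 0 and α(s) > 0 for all s > 0. Let f : [0,∞) → ℝ be uniformly continuous and suppose ∫₀^∞ α(|f(s)|) ds < ∞. Then lim_{t→∞} f(t) = 0. -/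
open MeasureTheory Filter Set

/-- Teel's Barbalat-type lemma with function composition: if `α` is continuous,
nondecreasing, zero only at zero on `[0,∞)`, `f` is uniformly continuous on
`[0,∞)`, and `α ∘ |f| ∈ L¹`, then `f(t) → 0`. -/
theorem teel_composition
    (α : ℝ → ℝ)
    (hα_nonneg : ∀ s ∈ Set.Ici (0:ℝ), 0 ≤ α s)
    (hα_cont : ContinuousOn α (Set.Ici 0))
    (hα_mono : MonotoneOn α (Set.Ici 0))
    (hα_zero : α 0 = 0)
    (hα_pos : ∀ s : ℝ, 0 < s → 0 < α s)
    (f : ℝ → ℝ)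
    (huc : UniformContinuousOn f (Set.Ici 0))
    (hint : MeasureTheory.IntegrableOn (fun s => α |f s|) (Set.Ici 0)) :
    Filter.Tendsto f Filter.atTop (nhds 0) := by
  set g : ℝ → ℝ := fun s => α |f s| with hg
  have hgnn : ∀ x, 0 ≤ g x := fun x => hα_nonneg _ (Set.mem_Ici.mpr (abs_nonneg _))
  by_contra hcon
  rw [Metric.tendsto_atTop] at hcon
  push_neg at hcon
  obtain ⟨ε, hε, hfreq⟩ := hcon
  obtain ⟨δ, hδ, hucδ⟩ := (Metric.uniformContinuousOn_iff.mp huc) (ε/2) (by linarith)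
  set c := α (ε/2) with hc
  have hcpos : 0 < c := hα_pos _ (by linarith)
  -- tail integrals tend to 0
  set C := ∫ x in Set.Ici (0:ℝ), g x with hC
  have hmonoS : Monotone (fun n : ℕ => Set.Ico (0:ℝ) n) := by
    intro m n hmn x hx
    exact ⟨hx.1, lt_of_lt_of_le hx.2 (by exact_mod_cast hmn)⟩
  have hunion : (⋃ n : ℕ, Set.Ico (0:ℝ) n) = Set.Ici 0 := by
    ext x
    simp only [Set.mem_iUnion, Set.mem_Ico, Set.mem_Ici]
    constructor
    · rintro ⟨n, h, _⟩; exact h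
    · intro hx
      obtain ⟨n, hn⟩ := exists_nat_gt x
      exact ⟨n, hx, hn⟩
  have htend : Tendsto (fun n : ℕ => ∫ x in Set.Ico (0:ℝ) n, g x) atTop (nhds C) := by
    have := MeasureTheory.tendsto_setIntegral_of_monotone
      (s := fun n : ℕ => Set.Ico (0:ℝ) n) (f := g) (μ := volume)
      (fun n => measurableSet_Ico) hmonoS (by rw [hunion]; exact hint)
    rwa [hunion] at this
  have hsplit : ∀ n : ℕ, C = (∫ x in Set.Ico (0:ℝ) n, g x) + ∫ x in Set.Ici (n:ℝ), g x := by
    intro n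
    have hdisj : Disjoint (Set.Ico (0:ℝ) n) (Set.Ici (n:ℝ)) := by
      rw [Set.disjoint_left]
      rintro x ⟨_, hx2⟩ hx3
      exact absurd hx3 (not_le.mpr hx2)
    have hunion' : Set.Ico (0:ℝ) n ∪ Set.Ici (n:ℝ) = Set.Ici 0 :=
      Set.Ico_union_Ici_eq_Ici (by positivity)
    rw [hC, ← hunion']
    exact MeasureTheory.setIntegral_union hdisj measurableSet_Ici
      (hint.mono_set (by rw [← hunion']; exact Set.subset_union_left))
      (hint.mono_set (by rw [← hunion']; exact Set.subset_union_right))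
  have htail : Tendsto (fun n : ℕ => ∫ x in Set.Ici (n:ℝ), g x) atTop (nhds 0) := by
    have : (fun n : ℕ => ∫ x in Set.Ici (n:ℝ), g x)
        = fun n : ℕ => C - ∫ x in Set.Ico (0:ℝ) n, g x := by
      funext n; rw [hsplit n]; ring
    rw [this]
    have := (tendsto_const_nhds (x := C) (f := atTop)).sub htend
    simpa using this
  obtain ⟨n, hn⟩ := (htail.eventually (gt_mem_nhds (show (0:ℝ) < c * (δ/2) by positivity))).exists
  obtain ⟨t, htn, htε⟩ := hfreq n
  have ht0 : (0:ℝ) ≤ t := le_trans (Nat.cast_nonneg n) htn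
  have htε' : ε ≤ |f t| := by simpa [Real.dist_eq] using htε
  -- on [t, t+δ/2] we have g ≥ c
  have hlow : ∀ s ∈ Set.Icc t (t + δ/2), c ≤ g s := by
    intro s hs
    have hs0 : (0:ℝ) ≤ s := le_trans ht0 hs.1
    have hdist : dist s t < δ := by
      rw [Real.dist_eq, abs_of_nonneg (by linarith [hs.1])]
      linarith [hs.2]
    have hfd : dist (f s) (f t) < ε/2 := hucδ s hs0 t ht0 hdist
    have : |f t| - |f s| ≤ |f t - f s| := abs_sub_abs_le_abs_sub _ _
    rw [Real.dist_eq] at hfd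
    have habs : ε/2 ≤ |f s| := by
      have : |f t - f s| = |f s - f t| := abs_sub_comm _ _
      linarith [abs_sub_abs_le_abs_sub (f t) (f s), this ▸ hfd]
    exact hα_mono (Set.mem_Ici.mpr (by linarith)) (Set.mem_Ici.mpr (abs_nonneg _)) habs
  have hsub : Set.Icc t (t + δ/2) ⊆ Set.Ici (0:ℝ) := fun x hx => le_trans ht0 hx.1
  have hIcc_int : IntegrableOn g (Set.Icc t (t + δ/2)) := hint.mono_set hsub
  have h1 : c * (δ/2) ≤ ∫ x in Set.Icc t (t + δ/2), g x := by
    have hconst : ∫ _x in Set.Icc t (t + δ/2), c = c * (δ/2) := by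
      rw [MeasureTheory.setIntegral_const, measureReal_def, Real.volume_Icc, smul_eq_mul]
      rw [show t + δ/2 - t = δ/2 by ring, ENNReal.toReal_ofReal (by positivity)]
      ring
    rw [← hconst]
    refine MeasureTheory.setIntegral_mono_on ?_ hIcc_int measurableSet_Icc hlow
    exact (MeasureTheory.integrableOn_const_iff enorm_ne_top).mpr (Or.inr (by rw [Real.volume_Icc]; exact ENNReal.ofReal_lt_top))
  have h2 : (∫ x in Set.Icc t (t + δ/2), g x) ≤ ∫ x in Set.Ici (n:ℝ), g x := by
    have hsubn : Set.Icc t (t + δ/2) ⊆ Set.Ici (n:ℝ) := fun x hx => le_trans htn hx.1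
    exact MeasureTheory.setIntegral_mono_set
      (hint.mono_set (Set.Ici_subset_Ici.mpr (Nat.cast_nonneg n)))
      (Filter.Eventually.of_forall hgnn) hsubn.eventuallyLE
  linarith
end

section
/- Let n ≥ 1 and let α : [0,∞) → [0,∞) be continuous, nondecreasing, with α(0) = 0 and α(s) > 0 for all s > 0. Let f : [0,∞) → ℝⁿ be uniformly continuous and suppose ∫₀^∞ α(‖f(s)‖) ds < ∞, where ‖·‖ is the Euclidean norm. Then lim_{t→∞} f(t) = 0. -/
open MeasureTheory Filter Set

/-- Vector-valued extension of Teel's composition lemma. -/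
theorem teel_composition_vector
    (n : ℕ) (hn : 1 ≤ n)
    (α : ℝ → ℝ)
    (hα_nonneg : ∀ s ∈ Set.Ici (0:ℝ), 0 ≤ α s)
    (hα_cont : ContinuousOn α (Set.Ici 0))
    (hα_mono : MonotoneOn α (Set.Ici 0))
    (hα_zero : α 0 = 0)
    (hα_pos : ∀ s : ℝ, 0 < s → 0 < α s)
    (f : ℝ → EuclideanSpace ℝ (Fin n))
    (huc : UniformContinuousOn f (Set.Ici 0))
    (hint : MeasureTheory.IntegrableOn (fun s => α ‖f s‖) (Set.Ici 0)) :
    Filter.Tendsto f Filter.atTop (nhds 0) := by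
  by_contra hcon
  rw [Metric.tendsto_atTop] at hcon
  push_neg at hcon
  obtain ⟨ε, hε, hbad⟩ := hcon
  rw [Metric.uniformContinuousOn_iff] at huc
  obtain ⟨δ, hδ, hucd⟩ := huc (ε/2) (by positivity)
  set g : ℝ → ℝ := fun s => α ‖f s‖ with hg
  set c : ℝ := α (ε/2) with hcdef
  have hc : 0 < c := hα_pos _ (by positivity)
  set δ' : ℝ := δ/2 with hδ'def
  have hδ' : 0 < δ' := by positivity
  -- nonnegativity of g on Ici 0 (indeed everywhere on norms)
  have hgnn : ∀ x : ℝ, 0 ≤ g x := fun x => hα_nonneg _ (norm_nonneg _)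
  -- tail of the integral is small for large k
  have hmono : Monotone (fun k : ℕ => Ico (0:ℝ) k) := by
    intro a b hab x hx
    exact ⟨hx.1, lt_of_lt_of_le hx.2 (by exact_mod_cast hab)⟩
  have hun : (⋃ k : ℕ, Ico (0:ℝ) k) = Ici 0 := by
    ext x
    simp only [mem_iUnion, mem_Ico, mem_Ici]
    constructor
    · rintro ⟨k, hk, _⟩; exact hk
    · intro hx
      obtain ⟨k, hk⟩ := exists_nat_gt x
      exact ⟨k, hx, hk⟩
  have htend := tendsto_setIntegral_of_monotone (μ := volume) (f := g)
    (fun k : ℕ => measurableSet_Ico) hmono (by rwa [hun])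
  rw [hun] at htend
  have hev : ∀ᶠ k : ℕ in atTop,
      (∫ x in Ici (0:ℝ), g x) - (∫ x in Ico (0:ℝ) k, g x) < c * δ' := by
    have := htend.eventually (eventually_gt_nhds
      (show (∫ x in Ici (0:ℝ), g x) - c * δ' < ∫ x in Ici (0:ℝ), g x by
        nlinarith))
    filter_upwards [this] with k hk
    linarith
  obtain ⟨k, hk⟩ := hev.exists
  -- split integral: tail over Ici k is < c δ'
  have hsplit : (∫ x in Ici (0:ℝ), g x)
      = (∫ x in Ico (0:ℝ) k, g x) + (∫ x in Ici (k:ℝ), g x) := by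
    rw [← setIntegral_union]
    · rw [Set.Ico_union_Ici_eq_Ici (by positivity : (0:ℝ) ≤ k)]
    · exact (Set.Iio_disjoint_Ici le_rfl).mono_left Set.Ico_subset_Iio_self
    · exact measurableSet_Ici
    · exact hint.mono_set (fun x hx => hx.1)
    · exact hint.mono_set (Set.Ici_subset_Ici.2 (Nat.cast_nonneg (α := ℝ) k))
  have htail : (∫ x in Ici (k:ℝ), g x) < c * δ' := by linarith [hsplit ▸ hk]
  -- choose a bad time past k
  obtain ⟨t₀, ht₀k, ht₀⟩ := hbad k
  have ht₀0 : (0:ℝ) ≤ t₀ := le_trans (by positivity) ht₀k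
  rw [dist_zero_right] at ht₀
  -- g ≥ c on [t₀, t₀+δ']
  have hlb : ∀ x ∈ Icc t₀ (t₀ + δ'), c ≤ g x := by
    intro x hx
    have hx0 : (0:ℝ) ≤ x := le_trans ht₀0 hx.1
    have hdxt : dist x t₀ < δ := by
      rw [Real.dist_eq, abs_of_nonneg (by linarith [hx.1])]
      linarith [hx.2]
    have hfx : dist (f x) (f t₀) < ε/2 := hucd x hx0 t₀ ht₀0 hdxt
    have hnorm : ε/2 ≤ ‖f x‖ := by
      have := norm_sub_norm_le (f t₀) (f x)
      rw [← dist_eq_norm, dist_comm] at this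
      linarith
    exact hα_mono (Set.mem_Ici.2 (by positivity)) (norm_nonneg _) hnorm
  have hIcc_sub : Icc t₀ (t₀ + δ') ⊆ Ici (k:ℝ) :=
    fun x hx => le_trans ht₀k hx.1
  have hintIcc : IntegrableOn g (Icc t₀ (t₀ + δ')) volume :=
    hint.mono_set (fun x hx => le_trans ht₀0 hx.1)
  have hmeas : (volume (Icc t₀ (t₀ + δ'))).toReal = δ' := by
    rw [Real.volume_Icc]
    simp [ENNReal.toReal_ofReal hδ'.le]
  have h1 : c * δ' ≤ ∫ x in Icc t₀ (t₀ + δ'), g x := by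
    have := setIntegral_ge_of_const_le (μ := volume) measurableSet_Icc
      (by rw [Real.volume_Icc]; exact ENNReal.ofReal_ne_top) hlb hintIcc
    rwa [measureReal_def, hmeas, smul_eq_mul, mul_comm] at this
  have h2 : (∫ x in Icc t₀ (t₀ + δ'), g x) ≤ ∫ x in Ici (k:ℝ), g x := by
    apply setIntegral_mono_set
      (hint.mono_set (Set.Ici_subset_Ici.2 (Nat.cast_nonneg (α := ℝ) k)))
      (Filter.Eventually.of_forall fun x => hgnn x)
    exact Filter.Eventually.of_forall hIcc_sub
  linarith
end

section
/- Let n ≥ 1, let r > 0, and let M : ℝⁿ → ℝ be continuous and positive definite on the ball {z ∈ ℝⁿ : ‖z‖ ≤ r}, i.e., M(0) = 0 and M(z) > 0 for all z with 0 < ‖z‖ ≤ r. Let f : [0,∞) → ℝⁿ be uniformly continuous with sup_{t≥0} ‖f(t)‖ ≤ r, and suppose ∫₀^∞ M(f(s)) ds < ∞. Then lim_{t→∞} f(t) = 0. -/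
open MeasureTheory Set

/-- Hou–Duan–Guo: let `M` be continuous and positive definite on the closed
ball of radius `r`. If `f` is uniformly continuous on `[0,∞)`, takes values in
that ball, and `M ∘ f ∈ L¹`, then `f(t) → 0`. -/
theorem hou_duan_guo
    (n : ℕ) (hn : 1 ≤ n) (r : ℝ) (hr : 0 < r)
    (M : EuclideanSpace ℝ (Fin n) → ℝ)
    (hM_cont : ContinuousOn M (Metric.closedBall 0 r))
    (hM_zero : M 0 = 0)
    (hM_pos : ∀ z : EuclideanSpace ℝ (Fin n), 0 < ‖z‖ → ‖z‖ ≤ r → 0 < M z)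
    (f : ℝ → EuclideanSpace ℝ (Fin n))
    (huc : UniformContinuousOn f (Set.Ici 0))
    (hfr : ∀ t ∈ Set.Ici (0:ℝ), ‖f t‖ ≤ r)
    (hint : MeasureTheory.IntegrableOn (fun s => M (f s)) (Set.Ici 0)) :
    Filter.Tendsto f Filter.atTop (nhds 0) := by
  by_contra hcon
  rw [Metric.tendsto_atTop] at hcon
  push_neg at hcon
  obtain ⟨ε, hε, hseq⟩ := hcon
  -- witnesses with nonneg time
  have h' : ∀ N : ℝ, ∃ t : ℝ, max N 0 ≤ t ∧ ε ≤ ‖f t‖ := by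
    intro N
    obtain ⟨t, ht1, ht2⟩ := hseq (max N 0)
    exact ⟨t, ht1, by rwa [dist_zero_right] at ht2⟩
  choose g hg1 hg2 using h'
  have hg0 : ∀ N, (0:ℝ) ≤ g N := fun N => le_trans (le_max_right _ _) (hg1 N)
  have hεr : ε ≤ r := le_trans (hg2 0) (hfr _ (hg0 0))
  -- uniform continuity
  obtain ⟨δ, hδ, hδ'⟩ := Metric.uniformContinuousOn_iff.mp huc (ε/2) (by linarith)
  -- the annulus and the minimum m
  set K : Set (EuclideanSpace ℝ (Fin n)) :=
    Metric.closedBall 0 r \ Metric.ball 0 (ε/2) with hK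
  have hKc : IsCompact K := (isCompact_closedBall 0 r).diff Metric.isOpen_ball
  have hKmem : ∀ z, z ∈ K ↔ (ε/2 ≤ ‖z‖ ∧ ‖z‖ ≤ r) := by
    intro z
    simp [hK, Metric.mem_closedBall, Metric.mem_ball, dist_zero_right, not_lt, and_comm]
  have hKne : K.Nonempty := by
    refine ⟨EuclideanSpace.single ⟨0, hn⟩ (ε/2), (hKmem _).2 ?_⟩
    rw [EuclideanSpace.norm_single, Real.norm_eq_abs, abs_of_pos (by linarith)]
    constructor <;> linarith
  obtain ⟨z₀, hz₀K, hz₀min⟩ :=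
    hKc.exists_isMinOn hKne (hM_cont.mono (fun z hz => hz.1))
  set m := M z₀ with hm
  have hmpos : 0 < m := by
    have := (hKmem z₀).1 hz₀K
    exact hM_pos z₀ (lt_of_lt_of_le (by linarith) this.1) this.2
  -- recursive sequence of times
  set T : ℕ → ℝ := fun k => Nat.rec (g 0) (fun _ prev => g (prev + δ)) k with hT
  have hT0 : ∀ k, 0 ≤ T k := by
    intro k; cases k with
    | zero => exact hg0 0
    | succ k => exact hg0 _
  have hTf : ∀ k, ε ≤ ‖f (T k)‖ := by
    intro k; cases k with
    | zero => exact hg2 0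
    | succ k => exact hg2 _
  have hTstep : ∀ k, T k + δ ≤ T (k+1) := by
    intro k; exact le_trans (le_max_left _ _) (hg1 (T k + δ))
  have hTmono : ∀ k l, k < l → T k + δ ≤ T l := by
    intro k l hkl
    induction l with
    | zero => omega
    | succ l ih =>
      rcases Nat.lt_succ_iff_lt_or_eq.mp hkl with h | h
      · have := hTstep l
        have := ih h
        linarith [hδ, hT0 l]
      · subst h; exact hTstep k
  -- nonnegativity of M ∘ f on [0,∞)
  have hnonneg : ∀ s ∈ Ici (0:ℝ), 0 ≤ M (f s) := by
    intro s hs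
    rcases eq_or_ne (f s) 0 with h | h
    · rw [h, hM_zero]
    · exact le_of_lt (hM_pos _ (norm_pos_iff.mpr h) (hfr s hs))
  -- lower bound on the intervals
  have hlow : ∀ k, ∀ s ∈ Icc (T k) (T k + δ/2), m ≤ M (f s) := by
    intro k s hs
    have hs0 : (0:ℝ) ≤ s := le_trans (hT0 k) hs.1
    have hd : dist s (T k) < δ := by
      rw [Real.dist_eq, abs_of_nonneg (by linarith [hs.1])]
      linarith [hs.2]
    have hdist : dist (f s) (f (T k)) < ε/2 := hδ' s hs0 (T k) (hT0 k) hd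
    have h1 : ε/2 ≤ ‖f s‖ := by
      have := norm_sub_norm_le (f (T k)) (f s)
      rw [← dist_eq_norm] at this
      have := hTf k
      rw [dist_comm] at hdist
      linarith
    have h2 : ‖f s‖ ≤ r := hfr s hs0
    exact hz₀min ((hKmem (f s)).2 ⟨h1, h2⟩)
  -- for each natural K, K * (m * (δ/2)) ≤ ∫
  set C := ∫ s in Ici (0:ℝ), M (f s) with hC
  have hkey : ∀ N : ℕ, (N : ℝ) * (m * (δ/2)) ≤ C := by
    intro N
    set I : ℕ → Set ℝ := fun k => Icc (T k) (T k + δ/2) with hI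
    have hIsub : ∀ k, I k ⊆ Ici (0:ℝ) := fun k s hs => le_trans (hT0 k) hs.1
    have hImeas : ∀ k ∈ Finset.range N, MeasurableSet (I k) := fun k _ => measurableSet_Icc
    have hIdisj : Set.Pairwise (↑(Finset.range N)) (Function.onFun Disjoint I) := by
      have key : ∀ a b : ℕ, a < b → Disjoint (I a) (I b) := by
        intro a b h
        have hT' := hTmono a b h
        refine Set.disjoint_left.mpr fun x hxa hxb => ?_
        have h1 : x ≤ T a + δ/2 := hxa.2
        have h2 : T b ≤ x := hxb.1
        linarith [hδ]
      intro a _ b _ hab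
      rcases lt_or_gt_of_ne hab with h | h
      · exact key a b h
      · exact (key b a h).symm
    have hIint : ∀ k ∈ Finset.range N, IntegrableOn (fun s => M (f s)) (I k) volume :=
      fun k _ => hint.mono_set (hIsub k)
    have hsum : ∫ s in ⋃ k ∈ Finset.range N, I k, M (f s) =
        ∑ k ∈ Finset.range N, ∫ s in I k, M (f s) :=
      integral_biUnion_finset (Finset.range N) hImeas hIdisj hIint
    have hle1 : ∀ k ∈ Finset.range N, m * (δ/2) ≤ ∫ s in I k, M (f s) := by
      intro k _
      have hμ : volume (I k) ≠ ⊤ := by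
        rw [hI]; simp [Real.volume_Icc]
      have := setIntegral_ge_of_const_le measurableSet_Icc hμ (hlow k)
        (hint.mono_set (hIsub k))
      have hvol : (volume (I k)).toReal = δ/2 := by
        simp only [hI, Real.volume_Icc]
        rw [show T k + δ/2 - T k = δ/2 by ring, ENNReal.toReal_ofReal (by linarith)]
      have e : volume.real (Icc (T k) (T k + δ/2)) = δ/2 := hvol
      rw [e, smul_eq_mul, mul_comm] at this
      exact this
    have hle2 : ∫ s in ⋃ k ∈ Finset.range N, I k, M (f s) ≤ C := by
      refine setIntegral_mono_set hint ?_ ?_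
      · filter_upwards [ae_restrict_mem measurableSet_Ici] with s hs using hnonneg s hs
      · exact HasSubset.Subset.eventuallyLE (Set.iUnion₂_subset fun k _ => hIsub k)
    calc (N : ℝ) * (m * (δ/2)) = ∑ _k ∈ Finset.range N, m * (δ/2) := by
          simp [mul_comm]
      _ ≤ ∑ k ∈ Finset.range N, ∫ s in I k, M (f s) := Finset.sum_le_sum hle1
      _ = ∫ s in ⋃ k ∈ Finset.range N, I k, M (f s) := hsum.symm
      _ ≤ C := hle2
  -- contradiction
  have hc : 0 < m * (δ/2) := by positivity
  obtain ⟨N, hN⟩ := exists_nat_gt (C / (m * (δ/2)))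
  have := hkey N
  rw [div_lt_iff₀ hc] at hN
  linarith
end

section
/- Let n ≥ 1 and let f : [0,∞) → ℝⁿ be differentiable on [0,∞) with derivative f'. Suppose there exists p with 0 < p < ∞ such that ∫₀^∞ ‖f(s)‖ᵖ ds < ∞ (i.e., f ∈ Lᵖₙ), and suppose f' is bounded on [0,∞), i.e., sup_{t≥0} ‖f'(t)‖ < ∞. Then lim_{t→∞} f(t) = 0. -/
open Set MeasureTheory Filter Topology

/-- Vector-valued extension of Tao's Lemma 2.15: if `f ∈ Lᵖₙ` for some
`0 < p < ∞` and `f'` is bounded on `[0,∞)`, then `f(t) → 0`. -/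
theorem tao_lemma_2_15_vector
    (n : ℕ) (hn : 1 ≤ n)
    (f f' : ℝ → EuclideanSpace ℝ (Fin n))
    (hderiv : ∀ t ∈ Set.Ici (0:ℝ), HasDerivWithinAt f (f' t) (Set.Ici 0) t)
    (hLp : ∃ p : ℝ, 0 < p ∧
      MeasureTheory.IntegrableOn (fun s => ‖f s‖ ^ p) (Set.Ici 0))
    (hbdd : ∃ C : ℝ, ∀ t ∈ Set.Ici (0:ℝ), ‖f' t‖ ≤ C) :
    Filter.Tendsto f Filter.atTop (nhds 0) := by
  obtain ⟨p, hp, hint⟩ := hLp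
  obtain ⟨C₀, hC₀⟩ := hbdd
  set C : ℝ := max C₀ 1 with hCdef
  have hC1 : (1:ℝ) ≤ C := le_max_right _ _
  have hC0 : (0:ℝ) < C := lt_of_lt_of_le one_pos hC1
  have hC' : ∀ t ∈ Set.Ici (0:ℝ), ‖f' t‖ ≤ C := fun t ht =>
    (hC₀ t ht).trans (le_max_left _ _)
  have hlip : ∀ x ∈ Set.Ici (0:ℝ), ∀ y ∈ Set.Ici (0:ℝ), ‖f y - f x‖ ≤ C * ‖y - x‖ :=
    fun x hx y hy =>
      Convex.norm_image_sub_le_of_norm_hasDerivWithin_le hderiv hC' (convex_Ici 0) hx hy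
  by_contra hcon
  rw [Metric.tendsto_atTop] at hcon
  push_neg at hcon
  obtain ⟨ε, hε, hfreq⟩ := hcon
  set δ : ℝ := ε / (2*C) with hδdef
  have hδ : 0 < δ := div_pos hε (by positivity)
  set g : ℝ → ℝ := fun s => ‖f s‖ ^ p with hg
  have hintIoi : IntegrableOn g (Set.Ioi 0) := hint.mono_set Set.Ioi_subset_Ici_self
  set m : ℝ := δ * (ε/2) ^ p with hm
  have hmpos : 0 < m := mul_pos hδ (Real.rpow_pos_of_pos (by positivity) p)
  have hII : ∀ a b : ℝ, 0 ≤ a → 0 ≤ b → IntervalIntegrable g volume a b := by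
    intro a b ha hb
    exact (hint.mono_set ((Set.ordConnected_Ici).uIcc_subset ha hb)).intervalIntegrable
  have h1 : Tendsto (fun t => ∫ x in (0:ℝ)..t, g x) atTop (𝓝 (∫ x in Set.Ioi 0, g x)) :=
    intervalIntegral_tendsto_integral_Ioi 0 hintIoi tendsto_id
  have h2 : Tendsto (fun t => ∫ x in (0:ℝ)..(t+δ), g x) atTop (𝓝 (∫ x in Set.Ioi 0, g x)) :=
    intervalIntegral_tendsto_integral_Ioi 0 hintIoi (tendsto_atTop_add_const_right _ δ tendsto_id)
  have h3 : Tendsto (fun t => (∫ x in (0:ℝ)..(t+δ), g x) - ∫ x in (0:ℝ)..t, g x)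
      atTop (𝓝 0) := by
    simpa using h2.sub h1
  have h4 := (h3.eventually_lt_const hmpos).exists_forall_of_atTop
  obtain ⟨T, hT⟩ := h4
  obtain ⟨t, ht, hft'⟩ := hfreq (max T 0)
  have ht0 : (0:ℝ) ≤ t := le_trans (le_max_right _ _) ht
  have htT : T ≤ t := le_trans (le_max_left _ _) ht
  have hft : ε ≤ ‖f t‖ := by simpa [dist_zero_right] using hft'
  have hCδ : C * δ = ε / 2 := by
    rw [hδdef]; field_simp
  have hlow : ∀ s ∈ Set.Icc t (t+δ), ε/2 ≤ ‖f s‖ := by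
    intro s hs
    have hs0 : (0:ℝ) ≤ s := le_trans ht0 hs.1
    have hd : ‖f s - f t‖ ≤ C * δ := by
      have := hlip t ht0 s hs0
      have habs : ‖s - t‖ ≤ δ := by
        rw [Real.norm_eq_abs, abs_of_nonneg (by linarith [hs.1])]
        linarith [hs.2]
      calc ‖f s - f t‖ ≤ C * ‖s - t‖ := this
        _ ≤ C * δ := by nlinarith
    have : ‖f t‖ - ‖f s‖ ≤ ‖f s - f t‖ := by
      have := norm_sub_norm_le (f t) (f s)
      rwa [norm_sub_rev] at this
    rw [hCδ] at hd
    linarith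
  have h5 : ∀ s ∈ Set.Icc t (t+δ), (ε/2) ^ p ≤ g s := by
    intro s hs
    exact Real.rpow_le_rpow (by positivity) (hlow s hs) hp.le
  have h6 : m ≤ ∫ x in t..(t+δ), g x := by
    have hconst : (∫ _x in t..(t+δ), (ε/2)^p) = m := by
      rw [intervalIntegral.integral_const]
      simp [hm, smul_eq_mul]
    rw [← hconst]
    exact intervalIntegral.integral_mono_on (by linarith)
      intervalIntegrable_const (hII t (t+δ) ht0 (by linarith)) h5
  have h7 : (∫ x in (0:ℝ)..t, g x) + (∫ x in t..(t+δ), g x)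
      = ∫ x in (0:ℝ)..(t+δ), g x :=
    intervalIntegral.integral_add_adjacent_intervals (hII 0 t le_rfl ht0)
      (hII t (t+δ) ht0 (by linarith))
  have h8 := hT t htT
  linarith
end

section
/- Let n ≥ 1 and let f : [0,∞) → ℝⁿ be differentiable on [0,∞) with derivative f'. Suppose there exist p ∈ [1,∞) and q ∈ (1,∞) such that ∫₀^∞ ‖f(s)‖ᵖ ds < ∞ and ∫₀^∞ ‖f'(s)‖^q ds < ∞. Then f is bounded on [0,∞), f is uniformly continuous, and lim_{t→∞} f(t) = 0. -/
open MeasureTheory Set Filter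
open scoped ENNReal


/-- Vector-valued Farkas–Wegner lemma: if `f ∈ Lᵖₙ` with `p ∈ [1,∞)` and
`f' ∈ L^qₙ` with `q ∈ (1,∞)`, then `f` is bounded and uniformly continuous
on `[0,∞)`, and `f(t) → 0`. -/
theorem farkas_wegner_vector
    (n : ℕ) (hn : 1 ≤ n)
    (f f' : ℝ → EuclideanSpace ℝ (Fin n))
    (hderiv : ∀ t ∈ Set.Ici (0:ℝ), HasDerivWithinAt f (f' t) (Set.Ici 0) t)
    (hLp : ∃ p : ℝ, 1 ≤ p ∧
      MeasureTheory.IntegrableOn (fun s => ‖f s‖ ^ p) (Set.Ici 0))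
    (hLq : ∃ q : ℝ, 1 < q ∧
      MeasureTheory.IntegrableOn (fun s => ‖f' s‖ ^ q) (Set.Ici 0)) :
    (∃ M : ℝ, ∀ t ∈ Set.Ici (0:ℝ), ‖f t‖ ≤ M) ∧
      UniformContinuousOn f (Set.Ici 0) ∧
      Filter.Tendsto f Filter.atTop (nhds 0) := by
  obtain ⟨p, hp, hfp⟩ := hLp
  obtain ⟨q, hq, hfq⟩ := hLq
  -- continuity
  have hcont : ContinuousOn f (Set.Ici 0) := fun t ht => (hderiv t ht).continuousWithinAt
  -- measurability of f' on Ici 0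
  have hmeas : AEStronglyMeasurable f' (volume.restrict (Set.Ici 0)) := by
    have heq : ∀ x ∈ Set.Ici (0:ℝ), (fun y => derivWithin f (Set.Ici y) y) x = f' x := by
      intro x hx
      exact ((hderiv x hx).mono (Set.Ici_subset_Ici.2 hx)).derivWithin
        (uniqueDiffOn_Ici x x Set.self_mem_Ici)
    exact (stronglyMeasurable_derivWithin_Ici f).aestronglyMeasurable.congr
      ((ae_restrict_iff' measurableSet_Ici).2 (ae_of_all _ heq))
  -- pointwise bound ‖f'‖ ≤ 1 + ‖f'‖^q
  have hbound : ∀ x, ‖f' x‖ ≤ 1 + ‖f' x‖ ^ q := by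
    intro x
    rcases le_total (‖f' x‖) 1 with h | h
    · have := Real.rpow_nonneg (norm_nonneg (f' x)) q
      linarith
    · have h1 : ‖f' x‖ ^ (1:ℝ) ≤ ‖f' x‖ ^ q :=
        Real.rpow_le_rpow_of_exponent_le h hq.le
      rw [Real.rpow_one] at h1
      linarith
  -- integrability of f' on compact intervals
  have hf'int : ∀ a b : ℝ, 0 ≤ a → MeasureTheory.IntegrableOn f' (Set.Icc a b) := by
    intro a b ha
    have hsub : Set.Icc a b ⊆ Set.Ici 0 := fun x hx => ha.trans hx.1
    refine MeasureTheory.Integrable.mono' (g := fun x => 1 + ‖f' x‖ ^ q) ?_ ?_ ?_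
    · exact (MeasureTheory.integrableOn_const measure_Icc_lt_top.ne).add
        (hfq.mono_set hsub)
    · exact hmeas.mono_measure (Measure.restrict_mono hsub le_rfl)
    · exact ae_of_all _ hbound
  -- FTC
  have hftc : ∀ a b : ℝ, 0 ≤ a → a ≤ b → f b - f a = ∫ s in a..b, f' s := by
    intro a b ha hab
    have hsub : Set.Icc a b ⊆ Set.Ici 0 := fun x hx => ha.trans hx.1
    refine (intervalIntegral.integral_eq_sub_of_hasDeriv_right_of_le hab
      (hcont.mono hsub) (fun x hx => ?_) ?_).symm
    · exact (hderiv x (ha.trans hx.1.le)).mono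
        (Set.Ioi_subset_Ici_self.trans (Set.Ici_subset_Ici.2 (ha.trans hx.1.le)))
    · exact (intervalIntegrable_iff_integrableOn_Icc_of_le hab).2 (hf'int a b ha)
  -- norm increment bound
  have hnorm : ∀ a b : ℝ, 0 ≤ a → a ≤ b →
      ‖f b - f a‖ ≤ (b - a) + ∫ s in Set.Icc a b, ‖f' s‖ ^ q := by
    intro a b ha hab
    rw [hftc a b ha hab]
    calc ‖∫ s in a..b, f' s‖ ≤ ∫ s in a..b, ‖f' s‖ :=
          intervalIntegral.norm_integral_le_integral_norm hab
      _ = ∫ s in Set.Icc a b, ‖f' s‖ := by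
          rw [intervalIntegral.integral_of_le hab, MeasureTheory.integral_Icc_eq_integral_Ioc]
      _ ≤ ∫ s in Set.Icc a b, (1 + ‖f' s‖ ^ q) := by
          exact MeasureTheory.setIntegral_mono_on (hf'int a b ha).norm
            ((MeasureTheory.integrableOn_const measure_Icc_lt_top.ne).add
              (hfq.mono_set (fun x hx => ha.trans hx.1))) measurableSet_Icc
            (fun x _ => hbound x)
      _ = (b - a) + ∫ s in Set.Icc a b, ‖f' s‖ ^ q := by
          rw [MeasureTheory.integral_add (μ := volume.restrict (Set.Icc a b)) (MeasureTheory.integrableOn_const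
            measure_Icc_lt_top.ne : IntegrableOn (fun _ : ℝ => (1:ℝ)) (Set.Icc a b) volume) (hfq.mono_set (fun x hx => ha.trans hx.1) : IntegrableOn (fun s => ‖f' s‖ ^ q) (Set.Icc a b) volume)]
          congr 1
          simp [Measure.real, Real.volume_Icc, ENNReal.toReal_ofReal (sub_nonneg.2 hab)]
  -- uniform modulus of continuity
  have hmod : ∀ ε : ℝ, 0 < ε → ∃ δ : ℝ, 0 < δ ∧ ∀ a b : ℝ, 0 ≤ a → a ≤ b → b - a ≤ δ →
      ‖f b - f a‖ ≤ ε := by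
    intro ε hε
    have hnonneg : ∀ x : ℝ, (0:ℝ) ≤ ‖f' x‖ ^ q := fun x => Real.rpow_nonneg (norm_nonneg _) _
    have hGfin : ∫⁻ x, ENNReal.ofReal (‖f' x‖ ^ q) ∂(volume.restrict (Set.Ici 0)) ≠ ⊤ := by
      have := hfq.2
      rwa [MeasureTheory.hasFiniteIntegral_iff_ofReal (ae_of_all _ hnonneg),
        lt_top_iff_ne_top] at this
    obtain ⟨δ₀, hδ₀, hsmall⟩ := MeasureTheory.exists_pos_setLIntegral_lt_of_measure_lt hGfin
      (ε := ENNReal.ofReal (ε/2)) ((ENNReal.ofReal_pos.2 (half_pos hε)).ne')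
    obtain ⟨d, hd, hdlt⟩ : ∃ d : ℝ, 0 < d ∧ ENNReal.ofReal d < δ₀ := by
      rcases eq_top_or_lt_top δ₀ with h | h
      · exact ⟨1, one_pos, by simp [h]⟩
      · have ht := ENNReal.toReal_pos hδ₀.ne' h.ne
        refine ⟨δ₀.toReal / 2, by linarith, ?_⟩
        rw [ENNReal.ofReal_lt_iff_lt_toReal (by linarith) h.ne]
        linarith
    refine ⟨min (ε/2) d, lt_min (half_pos hε) hd, fun a b ha hab hlen => ?_⟩
    have hsub : Set.Icc a b ⊆ Set.Ici 0 := fun x hx => ha.trans hx.1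
    have hmlt : (volume.restrict (Set.Ici 0)) (Set.Icc a b) < δ₀ := by
      refine lt_of_le_of_lt (Measure.restrict_apply_le _ _) ?_
      rw [Real.volume_Icc]
      exact lt_of_le_of_lt (ENNReal.ofReal_le_ofReal
        (hlen.trans (min_le_right _ _))) hdlt
    have hkey := hsmall _ hmlt
    rw [Measure.restrict_restrict measurableSet_Icc,
      Set.inter_eq_self_of_subset_left hsub] at hkey
    have hint_eq : ∫ s in Set.Icc a b, ‖f' s‖ ^ q
        = (∫⁻ x in Set.Icc a b, ENNReal.ofReal (‖f' x‖ ^ q)).toReal := by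
      exact MeasureTheory.integral_eq_lintegral_of_nonneg_ae (ae_of_all _ hnonneg)
        (hfq.1.mono_measure (Measure.restrict_mono hsub le_rfl))
    have hle : ∫ s in Set.Icc a b, ‖f' s‖ ^ q ≤ ε/2 := by
      rw [hint_eq]
      have := ENNReal.toReal_mono (by simp) hkey.le
      rwa [ENNReal.toReal_ofReal (half_pos hε).le] at this
    have := hnorm a b ha hab
    have hba : b - a ≤ ε/2 := hlen.trans (min_le_left _ _)
    linarith
  -- tendsto 0
  have htend : Filter.Tendsto f Filter.atTop (nhds 0) := by
    rw [Metric.tendsto_nhds]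
    intro ε hε
    obtain ⟨δ, hδ, hmodδ⟩ := hmod (ε/2) (half_pos hε)
    have hpp : (0:ℝ) < p := lt_of_lt_of_le one_pos hp
    have hc : (0:ℝ) < δ * (ε/2)^p :=
      mul_pos hδ (Real.rpow_pos_of_pos (half_pos hε) p)
    -- window integrals tend to 0
    have hII : ∀ a b : ℝ, 0 ≤ a → a ≤ b →
        IntervalIntegrable (fun s => ‖f s‖ ^ p) volume a b := by
      intro a b ha hab
      exact (intervalIntegrable_iff_integrableOn_Icc_of_le hab).2
        (hfp.mono_set (fun x hx => ha.trans hx.1))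
    have hA : Filter.Tendsto (fun t => ∫ s in (0:ℝ)..t, ‖f s‖ ^ p) atTop
        (nhds (∫ s in Set.Ioi 0, ‖f s‖ ^ p)) :=
      MeasureTheory.intervalIntegral_tendsto_integral_Ioi 0
        (hfp.mono_set Set.Ioi_subset_Ici_self) tendsto_id
    have hA' : Filter.Tendsto (fun t => ∫ s in (0:ℝ)..(t+δ), ‖f s‖ ^ p) atTop
        (nhds (∫ s in Set.Ioi 0, ‖f s‖ ^ p)) :=
      hA.comp (tendsto_atTop_add_const_right atTop δ tendsto_id)
    have hW : Filter.Tendsto (fun t => ∫ s in t..(t+δ), ‖f s‖ ^ p) atTop (nhds 0) := by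
      have hsub := hA'.sub hA
      rw [sub_self] at hsub
      refine hsub.congr' ?_
      filter_upwards [eventually_ge_atTop (0:ℝ)] with t ht
      have := intervalIntegral.integral_add_adjacent_intervals
        (hII 0 t le_rfl ht) (hII t (t+δ) ht (by linarith))
      linarith [this]
    have hev : ∀ᶠ t : ℝ in atTop, (∫ s in t..(t+δ), ‖f s‖ ^ p) < δ * (ε/2)^p :=
      hW.eventually_lt_const hc
    filter_upwards [hev, eventually_ge_atTop (0:ℝ)] with t hWt ht0
    rw [dist_zero_right]
    by_contra hcon
    push_neg at hcon
    have key : ∀ s ∈ Set.Ioc t (t+δ), (ε/2)^p ≤ ‖f s‖ ^ p := by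
      intro s hs
      have h1 : ‖f s - f t‖ ≤ ε/2 :=
        hmodδ t s ht0 hs.1.le (by linarith [hs.2])
      have h2 : ε/2 ≤ ‖f s‖ := by
        have h3 : ‖f t‖ - ‖f s‖ ≤ ‖f t - f s‖ := norm_sub_norm_le _ _
        rw [norm_sub_rev] at h3
        linarith
      exact Real.rpow_le_rpow (by linarith) h2 hpp.le
    have hlow : δ * (ε/2)^p ≤ ∫ s in t..(t+δ), ‖f s‖ ^ p := by
      rw [intervalIntegral.integral_of_le (by linarith : t ≤ t + δ)]
      have h4 : ∫ s in Set.Ioc t (t+δ), (ε/2)^p ≤ ∫ s in Set.Ioc t (t+δ), ‖f s‖ ^ p :=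
        MeasureTheory.setIntegral_mono_on
          (MeasureTheory.integrableOn_const measure_Ioc_lt_top.ne)
          (hfp.mono_set (fun x hx => ht0.trans hx.1.le)) measurableSet_Ioc key
      rw [MeasureTheory.setIntegral_const, Measure.real, Real.volume_Ioc,
        ENNReal.toReal_ofReal (by linarith : (0:ℝ) ≤ t + δ - t), smul_eq_mul] at h4
      calc δ * (ε/2)^p = (t + δ - t) * (ε/2)^p := by ring_nf
        _ ≤ _ := h4
    linarith
  -- boundedness
  have hbdd : ∃ M : ℝ, ∀ t ∈ Set.Ici (0:ℝ), ‖f t‖ ≤ M := by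
    have hnt : Filter.Tendsto (fun t => ‖f t‖) atTop (nhds 0) := by
      simpa using htend.norm
    obtain ⟨T, hT⟩ := eventually_atTop.1 (hnt.eventually_lt_const one_pos)
    obtain ⟨C, hC⟩ := (isCompact_Icc (a := (0:ℝ)) (b := max T 0)).exists_bound_of_continuousOn
      (hcont.mono (fun x hx => hx.1))
    refine ⟨max C 1, fun t ht => ?_⟩
    rcases le_total t (max T 0) with h | h
    · exact le_trans (hC t ⟨ht, h⟩) (le_max_left _ _)
    · exact le_trans (hT t ((le_max_left T 0).trans h)).le (le_max_right _ _)
  -- uniform continuity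
  have hUC : UniformContinuousOn f (Set.Ici 0) := by
    rw [Metric.uniformContinuousOn_iff]
    intro ε hε
    obtain ⟨δ, hδ, hmodδ⟩ := hmod (ε/2) (half_pos hε)
    refine ⟨δ, hδ, fun x hx y hy hxy => ?_⟩
    rcases le_total x y with h | h
    · rw [dist_comm, dist_eq_norm]
      have : y - x ≤ δ := by
        have := abs_sub_abs_le_abs_sub x y
        rw [Real.dist_eq] at hxy
        calc y - x ≤ |x - y| := by rw [abs_sub_comm]; exact le_abs_self _
          _ ≤ δ := hxy.le
      exact lt_of_le_of_lt (hmodδ x y hx h this) (by linarith)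
    · rw [dist_eq_norm]
      have : x - y ≤ δ := by
        rw [Real.dist_eq] at hxy
        calc x - y ≤ |x - y| := le_abs_self _
          _ ≤ δ := hxy.le
      exact lt_of_le_of_lt (hmodδ y x hy h this) (by linarith)
  exact ⟨hbdd, hUC, htend⟩
end
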